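/- arXiv:1012.5901 — 5 statements merged into one kernel-verified Lean document; each statement's English description precedes it below -/
import Mathlib

section
/- Hardy–Littlewood inequality, case ρ > 0 (Lemma 1 (ii)): Let α > −1/2, ρ > 0, and define g(x) = x^{2(α+1)} for x > k and g(x) = x³ for 0 ≤ x ≤ k, where k is the constant appearing in the estimates of |c(λ)|^{−2}. For every p with 1 < p ≤ 2 there is a constant c > 0 such that for all f ∈ L^p_A(ℝ₊), ∫₀^∞ (g(x))^{p−2} |𝓕(f)(x)|^p dx/|c(x)|² ≤ c ‖f‖_{A,p}^p. -/
open MeasureTheory Set Filter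
open scoped ENNReal

/-- The `L^p` norm on `(0,∞)` with respect to the weighted measure `w(x) dx`. -/
noncomputable def wLpNorm (w : ℝ → ℝ) (p : ℝ) (f : ℝ → ℂ) : ℝ :=
  (∫ x in Set.Ioi (0 : ℝ), ‖f x‖ ^ p * w x) ^ (1 / p)

/-- Membership in `L^p((0,∞), w(x) dx)`. -/
def MemW (w : ℝ → ℝ) (p : ℝ) (f : ℝ → ℂ) : Prop :=
  AEMeasurable f (volume.restrict (Set.Ioi (0 : ℝ))) ∧
    IntegrableOn (fun x => ‖f x‖ ^ p * w x) (Set.Ioi (0 : ℝ))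

/-- A Chébli–Trimèche hypergroup setting with `ρ > 0` and `α > -1/2`:
`A(x) = x^(2α+1) B(x)` with `B` an even `C^∞` function, `B ≥ 1` on `ℝ₊`, `A`
increasing and unbounded, `A'/A` decreasing on `(0,∞)` with limit `2ρ` at infinity.
The characters `φ_λ` are the even smooth solutions of
`u'' + (A'/A) u' = -(λ² + ρ²) u`, `u(0) = 1`, `u'(0) = 0`.  The density
`cden = |c(λ)|⁻²` is even, continuous, comparable to `|λ|^(2α+1)` for `|λ| > k` and
to `|λ|²` for `|λ| ≤ k`.  The generalized Fourier transform `FT` is given on `L¹_A`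
by `𝓕(f)(λ) = ∫₀^∞ f(x) φ_λ(x) A(x) dx`; it satisfies `‖𝓕 f‖_{c,∞} ≤ ‖f‖_{A,1}`
and the Plancherel formula `‖𝓕 f‖_{c,2} = ‖f‖_{A,2}`. -/
structure CTHypergroupPos where
  α : ℝ
  ρ : ℝ
  hα : -(1/2) < α
  hρ : 0 < ρ
  B : ℝ → ℝ
  hB_even : ∀ x : ℝ, B (-x) = B x
  hB_smooth : ContDiff ℝ (⊤ : ℕ∞) B
  hB_one : ∀ x : ℝ, 0 ≤ x → 1 ≤ B x
  /-- the Chébli–Trimèche weight function -/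
  A : ℝ → ℝ
  hA : ∀ x : ℝ, 0 ≤ x → A x = x ^ (2 * α + 1) * B x
  hA_mono : StrictMonoOn A (Set.Ici 0)
  hA_unbounded : Tendsto A atTop atTop
  hA'A_anti : AntitoneOn (fun x => deriv A x / A x) (Set.Ioi 0)
  hA'A_lim : Tendsto (fun x => deriv A x / A x) atTop (nhds (2 * ρ))
  /-- the characters `φ_λ` of the hypergroup -/
  φ : ℝ → ℝ → ℂ
  hφ_even : ∀ (lam x : ℝ), φ lam (-x) = φ lam x
  hφ_smooth : ∀ lam : ℝ, ContDiff ℝ (⊤ : ℕ∞) (φ lam)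
  hφ_ode : ∀ (lam x : ℝ), 0 < x →
    deriv (deriv (φ lam)) x + Complex.ofReal (deriv A x / A x) * deriv (φ lam) x
      = -((lam : ℂ) ^ 2 + (ρ : ℂ) ^ 2) * φ lam x
  hφ_zero : ∀ lam : ℝ, φ lam 0 = 1 ∧ deriv (φ lam) 0 = 0
  /-- the density `|c(λ)|⁻²` of the Plancherel measure -/
  cden : ℝ → ℝ
  hcden_cont : Continuous cden
  hcden_even : ∀ x : ℝ, cden (-x) = cden x
  /-- the threshold constant in the estimates of `|c(λ)|⁻²` -/
  k : ℝ
  k₁ : ℝ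
  k₂ : ℝ
  hk : 0 < k
  hk₁ : 0 < k₁
  hk₂ : 0 < k₂
  hcden_hi : ∀ lam : ℝ, k < |lam| →
    k₁ * |lam| ^ (2 * α + 1) ≤ cden lam ∧ cden lam ≤ k₂ * |lam| ^ (2 * α + 1)
  hcden_lo : ∀ lam : ℝ, |lam| ≤ k →
    k₁ * |lam| ^ (2 : ℝ) ≤ cden lam ∧ cden lam ≤ k₂ * |lam| ^ (2 : ℝ)
  /-- the generalized Fourier transform -/
  FT : (ℝ → ℂ) → ℝ → ℂ
  hFT_def : ∀ f : ℝ → ℂ, MemW A 1 f → ∀ lam : ℝ,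
    FT f lam = ∫ x in Set.Ioi (0 : ℝ), f x * φ lam x * (A x : ℂ)
  hFT_meas : ∀ f : ℝ → ℂ, Measurable (FT f)
  hFT_sub : ∀ f g : ℝ → ℂ, ∀ lam : ℝ,
    FT (fun y => f y - g y) lam = FT f lam - FT g lam
  /-- `‖𝓕 f‖_{c,∞} ≤ ‖f‖_{A,1}` -/
  hFT_sup : ∀ f : ℝ → ℂ, MemW A 1 f → ∀ lam : ℝ,
    ‖FT f lam‖ ≤ wLpNorm A 1 f
  /-- the Plancherel formula `‖𝓕 f‖_{c,2} = ‖f‖_{A,2}` -/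
  hPlancherel : ∀ f : ℝ → ℂ, MemW A 2 f →
    ∫⁻ lam in Set.Ioi (0 : ℝ),
        ENNReal.ofReal (‖FT f lam‖ ^ (2 : ℝ) * cden lam)
      = ∫⁻ x in Set.Ioi (0 : ℝ),
        ENNReal.ofReal (‖f x‖ ^ (2 : ℝ) * A x)



lemma HLaux.meas_ofReal_mul_rpow (c q : ℝ) :
    Measurable fun x : ℝ => ENNReal.ofReal (c * x ^ q) :=
  ((measurable_const.mul (measurable_id.pow_const q))).ennreal_ofReal

lemma HLaux.lint_Ioi_rpow {a q : ℝ} (ha : 0 < a) (hq : q < -1) :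
    ∫⁻ s in Set.Ioi a, ENNReal.ofReal (s ^ q) = ENNReal.ofReal (a ^ (q + 1) / (-(q + 1))) := by
  have hint : IntegrableOn (fun s : ℝ => s ^ q) (Set.Ioi a) :=
    integrableOn_Ioi_rpow_of_lt hq ha
  rw [← ofReal_integral_eq_lintegral_ofReal hint]
  · congr 1
    rw [integral_Ioi_rpow_of_lt hq ha, div_neg, neg_div]
  · filter_upwards [ae_restrict_mem measurableSet_Ioi] with s hs
    exact Real.rpow_nonneg (ha.trans hs).le _

lemma HLaux.lint_Ioi_rpow_le {a q c t : ℝ} (ha : 0 < a) (hq : q < -1) (hc : 0 ≤ c)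
    (ht : 0 < t) (hat : a ^ (q + 1) / (-(q + 1)) ≤ t⁻¹) :
    ∫⁻ s in Set.Ioi a, ENNReal.ofReal (c * s ^ q) ≤ ENNReal.ofReal (c / t) := by
  have h1 : ∀ s ∈ Set.Ioi a, ENNReal.ofReal (c * s ^ q)
      = ENNReal.ofReal c * ENNReal.ofReal (s ^ q) := fun s _ => ENNReal.ofReal_mul hc
  rw [setLIntegral_congr_fun measurableSet_Ioi h1,
    lintegral_const_mul' _ _ ENNReal.ofReal_ne_top, HLaux.lint_Ioi_rpow ha hq]
  rw [← ENNReal.ofReal_mul hc]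
  apply ENNReal.ofReal_le_ofReal
  rw [div_eq_mul_inv c t]
  exact mul_le_mul_of_nonneg_left hat hc

lemma HLaux.weak_bound {α k k₂ : ℝ} (hα : -(1/2 : ℝ) < α) (hk : 0 < k) (hk₂ : 0 < k₂)
    {cden : ℝ → ℝ}
    (hlo : ∀ x : ℝ, |x| ≤ k → cden x ≤ k₂ * |x| ^ (2 : ℝ))
    (hhi : ∀ x : ℝ, k < |x| → cden x ≤ k₂ * |x| ^ (2 * α + 1))
    {t : ℝ} (ht : 0 < t) :
    ∫⁻ x in {x : ℝ | t < (if x ≤ k then x ^ (3 : ℝ) else x ^ (2 * (α + 1)))} ∩ Set.Ioi 0,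
      ENNReal.ofReal ((if x ≤ k then x ^ (3 : ℝ) else x ^ (2 * (α + 1))) ^ (-2 : ℝ) * cden x)
      ≤ ENNReal.ofReal (2 * k₂ / t) := by
  set g : ℝ → ℝ := fun x => if x ≤ k then x ^ (3 : ℝ) else x ^ (2 * (α + 1)) with hg
  set E : Set ℝ := {x : ℝ | t < g x} ∩ Set.Ioi 0 with hE
  have hsplit : E ⊆ (E ∩ Set.Ioc 0 k) ∪ (E ∩ Set.Ioi k) := by
    intro x hx
    rcases le_or_gt x k with h | h
    · exact Or.inl ⟨hx, hx.2, h⟩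
    · exact Or.inr ⟨hx, h⟩
  have he : (0:ℝ) < 2 * (α + 1) := by linarith
  -- part 1 : small x
  have part1 : ∫⁻ x in E ∩ Set.Ioc 0 k,
      ENNReal.ofReal (g x ^ (-2 : ℝ) * cden x) ≤ ENNReal.ofReal (k₂ / t) := by
    have hsub : E ∩ Set.Ioc 0 k ⊆ Set.Ioi (t ^ ((3:ℝ)⁻¹)) := by
      rintro x ⟨⟨hxt, hx0⟩, hx0', hxk⟩
      simp only [mem_setOf_eq, hg] at hxt
      rw [if_pos hxk] at hxt
      have h2 : t ^ ((3:ℝ)⁻¹) < (x ^ (3:ℝ)) ^ ((3:ℝ)⁻¹) :=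
        Real.rpow_lt_rpow ht.le hxt (by norm_num)
      rwa [← Real.rpow_mul (le_of_lt hx0'),
        show (3:ℝ) * (3:ℝ)⁻¹ = 1 by norm_num, Real.rpow_one] at h2
    have hpt : ∀ x ∈ E ∩ Set.Ioc 0 k, ENNReal.ofReal (g x ^ (-2 : ℝ) * cden x)
        ≤ ENNReal.ofReal (k₂ * x ^ (-4 : ℝ)) := by
      rintro x ⟨⟨hxt, hx0⟩, hx0', hxk⟩
      apply ENNReal.ofReal_le_ofReal
      have hgx : g x = x ^ (3:ℝ) := if_pos hxk
      have hcd : cden x ≤ k₂ * x ^ (2:ℝ) := by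
        have := hlo x (by rwa [abs_of_pos hx0']); rwa [abs_of_pos hx0'] at this
      have h6 : g x ^ (-2:ℝ) = x ^ (-6:ℝ) := by
        rw [hgx, ← Real.rpow_mul (le_of_lt hx0')]; norm_num
      rw [h6]
      calc x ^ (-6:ℝ) * cden x ≤ x ^ (-6:ℝ) * (k₂ * x ^ (2:ℝ)) := by
            apply mul_le_mul_of_nonneg_left hcd (Real.rpow_nonneg hx0'.le _)
        _ = k₂ * x ^ (-4:ℝ) := by
            rw [mul_comm, mul_assoc, ← Real.rpow_add hx0']; norm_num
    calc ∫⁻ x in E ∩ Set.Ioc 0 k, ENNReal.ofReal (g x ^ (-2 : ℝ) * cden x)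
        ≤ ∫⁻ x in E ∩ Set.Ioc 0 k, ENNReal.ofReal (k₂ * x ^ (-4 : ℝ)) := by
          apply setLIntegral_mono (HLaux.meas_ofReal_mul_rpow _ _) hpt
      _ ≤ ∫⁻ x in Set.Ioi (t ^ ((3:ℝ)⁻¹)), ENNReal.ofReal (k₂ * x ^ (-4 : ℝ)) :=
          lintegral_mono_set hsub
      _ ≤ ENNReal.ofReal (k₂ / t) := by
          apply HLaux.lint_Ioi_rpow_le (Real.rpow_pos_of_pos ht _) (by norm_num) hk₂.le ht
          have : (t ^ ((3:ℝ)⁻¹)) ^ ((-4:ℝ) + 1) = t⁻¹ := by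
            rw [← Real.rpow_mul ht.le]; norm_num [Real.rpow_neg_one]
          rw [this]
          rw [show -((-4:ℝ) + 1) = 3 by norm_num]
          calc t⁻¹ / 3 ≤ t⁻¹ / 1 := by
                apply div_le_div_of_nonneg_left (inv_nonneg.mpr ht.le) one_pos (by norm_num)
            _ = t⁻¹ := div_one _
  -- part 2 : large x
  have part2 : ∫⁻ x in E ∩ Set.Ioi k,
      ENNReal.ofReal (g x ^ (-2 : ℝ) * cden x) ≤ ENNReal.ofReal (k₂ / t) := by
    set b : ℝ := max k (t ^ ((2 * (α + 1))⁻¹)) with hb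
    have hb0 : 0 < b := lt_max_of_lt_left hk
    have hsub : E ∩ Set.Ioi k ⊆ Set.Ioi b := by
      rintro x ⟨⟨hxt, hx0⟩, hxk⟩
      simp only [mem_setOf_eq, hg] at hxt
      rw [if_neg (not_le.mpr hxk)] at hxt
      have hx0' : (0:ℝ) < x := hk.trans hxk
      have h2 : t ^ ((2 * (α + 1))⁻¹) < (x ^ (2 * (α + 1))) ^ ((2 * (α + 1))⁻¹) :=
        Real.rpow_lt_rpow ht.le hxt (by positivity)
      rw [← Real.rpow_mul (le_of_lt hx0'), mul_inv_cancel₀ he.ne', Real.rpow_one] at h2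
      exact mem_Ioi.mpr (max_lt hxk h2)
    have hpt : ∀ x ∈ E ∩ Set.Ioi k, ENNReal.ofReal (g x ^ (-2 : ℝ) * cden x)
        ≤ ENNReal.ofReal (k₂ * x ^ (-(2 * α + 3) : ℝ)) := by
      rintro x ⟨⟨hxt, hx0⟩, hxk⟩
      have hx0' : (0:ℝ) < x := hk.trans hxk
      apply ENNReal.ofReal_le_ofReal
      have hgx : g x = x ^ (2 * (α + 1)) := if_neg (not_le.mpr hxk)
      have hcd : cden x ≤ k₂ * x ^ (2 * α + 1) := by
        have := hhi x (by rwa [abs_of_pos hx0']); rwa [abs_of_pos hx0'] at this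
      have h6 : g x ^ (-2:ℝ) = x ^ (-(4 * α + 4) : ℝ) := by
        rw [hgx, ← Real.rpow_mul (le_of_lt hx0')]; ring_nf
      rw [h6]
      calc x ^ (-(4 * α + 4):ℝ) * cden x
          ≤ x ^ (-(4 * α + 4):ℝ) * (k₂ * x ^ (2 * α + 1)) := by
            apply mul_le_mul_of_nonneg_left hcd (Real.rpow_nonneg hx0'.le _)
        _ = k₂ * x ^ (-(2 * α + 3):ℝ) := by
            rw [mul_comm, mul_assoc, ← Real.rpow_add hx0']; ring_nf
    calc ∫⁻ x in E ∩ Set.Ioi k, ENNReal.ofReal (g x ^ (-2 : ℝ) * cden x)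
        ≤ ∫⁻ x in E ∩ Set.Ioi k, ENNReal.ofReal (k₂ * x ^ (-(2 * α + 3) : ℝ)) := by
          apply setLIntegral_mono (HLaux.meas_ofReal_mul_rpow _ _) hpt
      _ ≤ ∫⁻ x in Set.Ioi b, ENNReal.ofReal (k₂ * x ^ (-(2 * α + 3) : ℝ)) :=
          lintegral_mono_set hsub
      _ ≤ ENNReal.ofReal (k₂ / t) := by
          apply HLaux.lint_Ioi_rpow_le hb0 (by linarith) hk₂.le ht
          have hq1 : (-(2 * α + 3) : ℝ) + 1 = -(2 * (α + 1)) := by ring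
          rw [hq1, neg_neg]
          have hble : t ^ ((2 * (α + 1))⁻¹) ≤ b := le_max_right _ _
          have h1 : b ^ (-(2 * (α + 1))) ≤ (t ^ ((2 * (α + 1))⁻¹)) ^ (-(2 * (α + 1))) :=
            Real.rpow_le_rpow_of_nonpos (Real.rpow_pos_of_pos ht _) hble (by linarith)
          have h2 : (t ^ ((2 * (α + 1))⁻¹)) ^ (-(2 * (α + 1))) = t⁻¹ := by
            rw [← Real.rpow_mul ht.le, show (2 * (α + 1))⁻¹ * -(2 * (α + 1)) = -1 by
              (have hα1 : α + 1 ≠ 0 := by linarith); field_simp, Real.rpow_neg_one]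
          rw [h2] at h1
          calc b ^ (-(2 * (α + 1))) / (2 * (α + 1)) ≤ t⁻¹ / (2 * (α + 1)) := by
                exact div_le_div_of_nonneg_right h1 he.le
            _ ≤ t⁻¹ / 1 := by
                apply div_le_div_of_nonneg_left (inv_nonneg.mpr ht.le) one_pos (by linarith)
            _ = t⁻¹ := div_one _
  calc ∫⁻ x in E, ENNReal.ofReal (g x ^ (-2 : ℝ) * cden x)
      ≤ ∫⁻ x in (E ∩ Set.Ioc 0 k) ∪ (E ∩ Set.Ioi k),
          ENNReal.ofReal (g x ^ (-2 : ℝ) * cden x) := lintegral_mono_set hsplit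
    _ ≤ (∫⁻ x in E ∩ Set.Ioc 0 k, ENNReal.ofReal (g x ^ (-2 : ℝ) * cden x))
        + ∫⁻ x in E ∩ Set.Ioi k, ENNReal.ofReal (g x ^ (-2 : ℝ) * cden x) :=
        lintegral_union_le _ _ _
    _ ≤ ENNReal.ofReal (k₂ / t) + ENNReal.ofReal (k₂ / t) := add_le_add part1 part2
    _ = ENNReal.ofReal (2 * k₂ / t) := by
        rw [← ENNReal.ofReal_add (by positivity) (by positivity)]
        ring_nf

lemma HLaux.lint_Ioc_rpow {b q : ℝ} (hb : 0 < b) (hq : -1 < q) :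
    ∫⁻ s in Set.Ioc 0 b, ENNReal.ofReal (s ^ q) = ENNReal.ofReal (b ^ (q + 1) / (q + 1)) := by
  have hint : IntegrableOn (fun s : ℝ => s ^ q) (Set.Ioc 0 b) :=
    (intervalIntegral.intervalIntegrable_rpow' hq (a := 0) (b := b)).1
  rw [← ofReal_integral_eq_lintegral_ofReal hint]
  · congr 1
    rw [← intervalIntegral.integral_of_le hb.le, integral_rpow (Or.inl hq)]
    rw [Real.zero_rpow (by linarith), sub_zero]
  · filter_upwards [ae_restrict_mem measurableSet_Ioc] with s hs
    exact Real.rpow_nonneg hs.1.le _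

lemma HLaux.lint_Ioi_rpow' {a q : ℝ} (ha : 0 < a) (hq : q < -1) :
    ∫⁻ s in Set.Ioi a, ENNReal.ofReal (s ^ q) = ENNReal.ofReal (a ^ (q + 1) / (-(q + 1))) := by
  have hint : IntegrableOn (fun s : ℝ => s ^ q) (Set.Ioi a) :=
    integrableOn_Ioi_rpow_of_lt hq ha
  rw [← ofReal_integral_eq_lintegral_ofReal hint]
  · congr 1
    rw [integral_Ioi_rpow_of_lt hq ha, div_neg, neg_div]
  · filter_upwards [ae_restrict_mem measurableSet_Ioi] with s hs
    exact Real.rpow_nonneg (ha.trans hs).le _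

lemma HLaux.inner_T1 {p a Ax : ℝ} (hp : 1 < p) (ha : 0 ≤ a) (hAx : 0 ≤ Ax) :
    ∫⁻ s in Set.Ioi (0:ℝ), ENNReal.ofReal (s ^ (p - 2)) *
        ENNReal.ofReal ((if s < a then a else 0) * Ax)
      ≤ ENNReal.ofReal ((p - 1)⁻¹ * (a ^ p * Ax)) := by
  rcases eq_or_lt_of_le ha with rfl | ha'
  · have : ∀ s : ℝ, ENNReal.ofReal (s ^ (p - 2)) *
        ENNReal.ofReal ((if s < (0:ℝ) then (0:ℝ) else 0) * Ax) = 0 := by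
      intro s; simp
    simp only [this, lintegral_const, zero_mul, mul_comm]
    simp
  · have hind : ∀ s : ℝ, ENNReal.ofReal (s ^ (p - 2)) *
        ENNReal.ofReal ((if s < a then a else 0) * Ax)
        = Set.indicator (Set.Iio a)
            (fun s => ENNReal.ofReal (s ^ (p - 2)) * ENNReal.ofReal (a * Ax)) s := by
      intro s
      by_cases h : s < a
      · rw [if_pos h, Set.indicator_of_mem (Set.mem_Iio.mpr h)]
      · rw [if_neg h, Set.indicator_of_notMem (by simpa using not_lt.mp h)]
        simp
    calc ∫⁻ s in Set.Ioi (0:ℝ), ENNReal.ofReal (s ^ (p - 2)) *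
            ENNReal.ofReal ((if s < a then a else 0) * Ax)
        = ∫⁻ s in Set.Iio a ∩ Set.Ioi 0,
            ENNReal.ofReal (s ^ (p - 2)) * ENNReal.ofReal (a * Ax) := by
          simp_rw [hind]
          rw [lintegral_indicator measurableSet_Iio,
            Measure.restrict_restrict measurableSet_Iio]
      _ ≤ ∫⁻ s in Set.Ioc 0 a, ENNReal.ofReal (s ^ (p - 2)) * ENNReal.ofReal (a * Ax) := by
          apply lintegral_mono_set
          intro s hs
          exact ⟨hs.2, le_of_lt hs.1⟩
      _ = ENNReal.ofReal (a ^ (p - 1) / (p - 1)) * ENNReal.ofReal (a * Ax) := by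
          rw [lintegral_mul_const' _ _ ENNReal.ofReal_ne_top,
            HLaux.lint_Ioc_rpow ha' (by linarith), show p - 2 + 1 = p - 1 by ring]
      _ ≤ ENNReal.ofReal ((p - 1)⁻¹ * (a ^ p * Ax)) := by
          have hp1 : (0:ℝ) < p - 1 := by linarith
          rw [← ENNReal.ofReal_mul (by positivity)]
          apply ENNReal.ofReal_le_ofReal
          have : a ^ p = a ^ (p - 1) * a := by
            rw [← Real.rpow_add_one ha'.ne' (p - 1), sub_add_cancel]
          rw [this]; ring_nf; rfl

lemma HLaux.inner_T2 {p a Ax : ℝ} (hp : 1 < p) (hp2 : p < 2) (ha : 0 ≤ a) (hAx : 0 ≤ Ax) :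
    ∫⁻ s in Set.Ioi (0:ℝ), ENNReal.ofReal (s ^ (p - 3)) *
        ENNReal.ofReal ((if s < a then 0 else a ^ (2:ℝ)) * Ax)
      ≤ ENNReal.ofReal ((2 - p)⁻¹ * (a ^ p * Ax)) := by
  rcases eq_or_lt_of_le ha with rfl | ha'
  · have : ∀ s : ℝ, ENNReal.ofReal (s ^ (p - 3)) *
        ENNReal.ofReal ((if s < (0:ℝ) then (0:ℝ) else (0:ℝ) ^ (2:ℝ)) * Ax) = 0 := by
      intro s
      rw [Real.zero_rpow (by norm_num)]
      simp
    simp only [this, lintegral_const, zero_mul, mul_comm]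
    simp
  · have hind : ∀ s : ℝ, ENNReal.ofReal (s ^ (p - 3)) *
        ENNReal.ofReal ((if s < a then 0 else a ^ (2:ℝ)) * Ax)
        = Set.indicator (Set.Ici a)
            (fun s => ENNReal.ofReal (s ^ (p - 3)) * ENNReal.ofReal (a ^ (2:ℝ) * Ax)) s := by
      intro s
      by_cases h : s < a
      · rw [if_pos h, Set.indicator_of_notMem (by simpa using h)]
        simp
      · rw [if_neg h, Set.indicator_of_mem (Set.mem_Ici.mpr (not_lt.mp h))]
    calc ∫⁻ s in Set.Ioi (0:ℝ), ENNReal.ofReal (s ^ (p - 3)) *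
            ENNReal.ofReal ((if s < a then 0 else a ^ (2:ℝ)) * Ax)
        = ∫⁻ s in Set.Ici a ∩ Set.Ioi 0,
            ENNReal.ofReal (s ^ (p - 3)) * ENNReal.ofReal (a ^ (2:ℝ) * Ax) := by
          simp_rw [hind]
          rw [lintegral_indicator measurableSet_Ici,
            Measure.restrict_restrict measurableSet_Ici]
      _ = ∫⁻ s in Set.Ici a, ENNReal.ofReal (s ^ (p - 3)) * ENNReal.ofReal (a ^ (2:ℝ) * Ax) := by
          have hset : Set.Ici a ∩ Set.Ioi 0 = Set.Ici a :=
            Set.inter_eq_left.mpr (fun x hx => lt_of_lt_of_le ha' hx)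
          rw [hset]
      _ = ∫⁻ s in Set.Ioi a, ENNReal.ofReal (s ^ (p - 3)) * ENNReal.ofReal (a ^ (2:ℝ) * Ax) :=
          (setLIntegral_congr (Ioi_ae_eq_Ici (a := a))).symm
      _ = ENNReal.ofReal (a ^ (p - 2) / (2 - p)) * ENNReal.ofReal (a ^ (2:ℝ) * Ax) := by
          rw [lintegral_mul_const' _ _ ENNReal.ofReal_ne_top,
            HLaux.lint_Ioi_rpow' ha' (by linarith), show p - 3 + 1 = p - 2 by ring,
            show -(p - 2) = 2 - p by ring]
      _ ≤ ENNReal.ofReal ((2 - p)⁻¹ * (a ^ p * Ax)) := by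
          have hp1 : (0:ℝ) < 2 - p := by linarith
          rw [← ENNReal.ofReal_mul (by positivity)]
          apply ENNReal.ofReal_le_ofReal
          have : a ^ p = a ^ (p - 2) * a ^ (2:ℝ) := by
            rw [← Real.rpow_add ha', sub_add_cancel]
          rw [this]; ring_nf; rfl

set_option maxHeartbeats 1000000 in
/-- **Hardy–Littlewood inequality, case ρ > 0** (Lemma 1 (ii)): let `α > -1/2`,
`ρ > 0`, and define `g(x) = x^(2(α+1))` for `x > k` and `g(x) = x³` for
`0 ≤ x ≤ k`, where `k` is the constant appearing in the estimates of `|c(λ)|⁻²`.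
For every `p` with `1 < p ≤ 2` there is a constant `c > 0` such that for all
`f ∈ L^p_A(ℝ₊)`,
`∫₀^∞ (g(x))^(p-2) |𝓕(f)(x)|^p dx/|c(x)|² ≤ c ‖f‖_{A,p}^p`. -/
theorem hardy_littlewood_rho_pos (S : CTHypergroupPos) (p : ℝ)
    (hp : 1 < p) (hp2 : p ≤ 2) :
    ∃ c > (0 : ℝ), ∀ f : ℝ → ℂ, MemW S.A p f →
      ∫⁻ x in Set.Ioi (0 : ℝ),
          ENNReal.ofReal ((if x ≤ S.k then x ^ (3 : ℝ) else x ^ (2 * (S.α + 1))) ^ (p - 2) *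
            ‖S.FT f x‖ ^ p * S.cden x)
        ≤ ENNReal.ofReal (c * wLpNorm S.A p f ^ p) := by
  classical
  have hp0 : (0:ℝ) < p := lt_trans one_pos hp
  have hcnn : ∀ x : ℝ, 0 ≤ S.cden x := by
    intro x
    rcases le_or_gt |x| S.k with hx | hx
    · have h1 := (S.hcden_lo x hx).1
      have h0 : 0 ≤ S.k₁ * |x| ^ (2:ℝ) := by
        have := S.hk₁; positivity
      linarith
    · have h1 := (S.hcden_hi x hx).1
      have h0 : 0 ≤ S.k₁ * |x| ^ (2 * S.α + 1) := by
        have := S.hk₁; positivity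
  -- a measurable version of A
      linarith
  set Ac : ℝ → ℝ := fun x => x ^ (2 * S.α + 1) * S.B x with hAc
  have hAcmeas : Measurable Ac :=
    (measurable_id.pow_const _).mul S.hB_smooth.continuous.measurable
  have hAeq : ∀ x : ℝ, 0 ≤ x → S.A x = Ac x := fun x hx => S.hA x hx
  have hAcnn : ∀ x : ℝ, 0 ≤ x → 0 ≤ Ac x := by
    intro x hx
    have h1 : (1:ℝ) ≤ S.B x := S.hB_one x hx
    have h2 : (0:ℝ) ≤ x ^ (2 * S.α + 1) := Real.rpow_nonneg hx _
    simp only [hAc]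
    nlinarith
  have hAnn : ∀ x : ℝ, 0 ≤ x → 0 ≤ S.A x := fun x hx => (hAeq x hx) ▸ hAcnn x hx
  have hAae : S.A =ᵐ[volume.restrict (Set.Ioi 0)] Ac := by
    filter_upwards [ae_restrict_mem measurableSet_Ioi] with x hx
    exact hAeq x hx.le
  have aemeasA : AEMeasurable S.A (volume.restrict (Set.Ioi 0)) := ⟨Ac, hAcmeas, hAae⟩
  set c : ℝ := 1 + 4 * S.k₂ * p / (p - 1) + 4 * p / (2 - p) with hcdef
  have hterm1 : 0 ≤ 4 * S.k₂ * p / (p - 1) := by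
    apply div_nonneg _ (by linarith)
    have := S.hk₂; positivity
  have hterm2 : 0 ≤ 4 * p / (2 - p) := div_nonneg (by positivity) (by linarith)
  have hc1 : (1:ℝ) ≤ c := by simp only [hcdef]; linarith
  refine ⟨c, by linarith, ?_⟩
  intro f hf
  set Np : ℝ := ∫ x in Set.Ioi (0:ℝ), ‖f x‖ ^ p * S.A x with hNp
  have hNp0 : 0 ≤ Np := by
    apply setIntegral_nonneg measurableSet_Ioi
    intro x hx
    exact mul_nonneg (Real.rpow_nonneg (norm_nonneg _) _) (hAnn x (le_of_lt hx))
  have hwn : wLpNorm S.A p f ^ p = Np := by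
    rw [wLpNorm, ← hNp, ← Real.rpow_mul hNp0, one_div, inv_mul_cancel₀ hp0.ne', Real.rpow_one]
  have hNpl : ∫⁻ x in Set.Ioi (0:ℝ), ENNReal.ofReal (‖f x‖ ^ p * S.A x)
      = ENNReal.ofReal Np := by
    rw [hNp, ← ofReal_integral_eq_lintegral_ofReal hf.2]
    filter_upwards [ae_restrict_mem measurableSet_Ioi] with x hx
    exact mul_nonneg (Real.rpow_nonneg (norm_nonneg _) _) (hAnn x (le_of_lt hx))
  rw [hwn]
  rcases eq_or_lt_of_le hp2 with rfl | hplt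
  · -- case p = 2 : direct Plancherel
    have hcong : ∀ x ∈ Set.Ioi (0:ℝ),
        ENNReal.ofReal ((if x ≤ S.k then x ^ (3 : ℝ) else x ^ (2 * (S.α + 1))) ^ ((2:ℝ) - 2) *
          ‖S.FT f x‖ ^ (2:ℝ) * S.cden x)
        = ENNReal.ofReal (‖S.FT f x‖ ^ (2:ℝ) * S.cden x) := by
      intro x hx
      rw [show (2:ℝ) - 2 = 0 by norm_num, Real.rpow_zero, one_mul]
    rw [setLIntegral_congr_fun measurableSet_Ioi hcong, S.hPlancherel f hf, hNpl]
    apply ENNReal.ofReal_le_ofReal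
    nlinarith
  · -- main case 1 < p < 2
    obtain ⟨hfm, hfi⟩ := hf
    set f' : ℝ → ℂ := hfm.mk f with hf'def
    have hf'meas : Measurable f' := hfm.measurable_mk
    have hff' : f =ᵐ[volume.restrict (Set.Ioi 0)] f' := hfm.ae_eq_mk
    set g : ℝ → ℝ := fun x => if x ≤ S.k then x ^ (3:ℝ) else x ^ (2*(S.α+1)) with hgdef
    have hgx : ∀ x : ℝ, (if x ≤ S.k then x ^ (3:ℝ) else x ^ (2*(S.α+1))) = g x := fun _ => rfl
    have hgmeas : Measurable g :=
      Measurable.ite (measurableSet_le measurable_id measurable_const)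
        (measurable_id.pow_const _) (measurable_id.pow_const _)
    have hgpos : ∀ x : ℝ, 0 < x → 0 < g x := by
      intro x hx
      by_cases hxk : x ≤ S.k
      · simp only [hgdef, if_pos hxk]; exact Real.rpow_pos_of_pos hx _
      · simp only [hgdef, if_neg hxk]; exact Real.rpow_pos_of_pos hx _
    set dens : ℝ → ℝ≥0∞ := fun x => ENNReal.ofReal (g x ^ (-2:ℝ) * S.cden x) with hdens
    have hdmeas : Measurable dens :=
      ((hgmeas.pow_const _).mul S.hcden_cont.measurable).ennreal_ofReal
    set μ : Measure ℝ := (volume.restrict (Set.Ioi 0)).withDensity dens with hμ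
    set h : ℝ → ℝ := fun x => g x * ‖S.FT f x‖ with hh
    have hFabs : Measurable fun x => ‖S.FT f x‖ :=
      continuous_norm.measurable.comp (S.hFT_meas f)
    have hhmeas : Measurable h := hgmeas.mul hFabs
    have hμE : ∀ E : Set ℝ, MeasurableSet E → μ E = ∫⁻ x in E ∩ Set.Ioi 0, dens x := by
      intro E hE
      rw [hμ, withDensity_apply _ hE, Measure.restrict_restrict hE]
    have hμout : μ (Set.Ioi (0:ℝ))ᶜ = 0 := by
      rw [hμE _ measurableSet_Ioi.compl, Set.compl_inter_self, Measure.restrict_empty,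
        lintegral_zero_measure]
    -- step 1 : LHS as integral against μ
    have step1 : ∫⁻ x in Set.Ioi (0:ℝ),
        ENNReal.ofReal (g x ^ (p - 2) * ‖S.FT f x‖ ^ p * S.cden x)
        = ∫⁻ x, ENNReal.ofReal (h x ^ p) ∂μ := by
      rw [hμ, lintegral_withDensity_eq_lintegral_mul _ hdmeas
        ((hhmeas.pow_const _).ennreal_ofReal)]
      apply (setLIntegral_congr_fun measurableSet_Ioi ?_).symm
      intro x hx
      have hgxp := hgpos x hx
      have hF : (0:ℝ) ≤ ‖S.FT f x‖ := norm_nonneg _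
      simp only [Pi.mul_apply, hh, hdens]
      rw [Real.mul_rpow hgxp.le hF, ← ENNReal.ofReal_mul (mul_nonneg (Real.rpow_nonneg hgxp.le _) (hcnn x))]
      congr 1
      have e2 : g x ^ (-2:ℝ) * g x ^ p = g x ^ (p-2) := by
        rw [← Real.rpow_add hgxp]; ring_nf
      calc g x ^ (-2:ℝ) * S.cden x * (g x ^ p * ‖S.FT f x‖ ^ p)
          = g x ^ (-2:ℝ) * g x ^ p * ‖S.FT f x‖ ^ p * S.cden x := by ring
        _ = g x ^ (p-2) * ‖S.FT f x‖ ^ p * S.cden x := by rw [e2]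
    -- layer cake
    have hhnn : (0:ℝ → ℝ) ≤ᵐ[μ] h := by
      have hsub : {a : ℝ | ¬ (0:ℝ → ℝ) a ≤ h a} ⊆ (Set.Ioi (0:ℝ))ᶜ := by
        intro a ha
        simp only [mem_setOf_eq, Pi.zero_apply, not_le] at ha
        simp only [mem_compl_iff, mem_Ioi, not_lt]
        by_contra hb
        push_neg at hb
        have h0 : 0 ≤ h a := mul_nonneg (hgpos a hb).le (norm_nonneg _)
        linarith
      exact (ae_iff.mpr (measure_mono_null hsub hμout))
    have gint : ∀ t > (0:ℝ), IntervalIntegrable (fun u : ℝ => p * u ^ (p-1)) volume 0 t :=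
      fun t _ => (intervalIntegral.intervalIntegrable_rpow' (by linarith)).const_mul p
    have gnn : ∀ᵐ t ∂volume.restrict (Set.Ioi (0:ℝ)), 0 ≤ p * t ^ (p-1) := by
      filter_upwards [ae_restrict_mem measurableSet_Ioi] with t ht
      exact mul_nonneg hp0.le (Real.rpow_nonneg (le_of_lt ht) _)
    have step2 := lintegral_comp_eq_lintegral_meas_lt_mul μ hhnn hhmeas.aemeasurable gint gnn
    have step2' : ∫⁻ x, ENNReal.ofReal (h x ^ p) ∂μ
        = ∫⁻ t in Set.Ioi (0:ℝ), μ {a | t < h a} * ENNReal.ofReal (p * t ^ (p-1)) := by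
      rw [← step2]
      apply lintegral_congr_ae
      filter_upwards [hhnn] with ω hω
      simp only [Pi.zero_apply] at hω
      congr 1
      rw [intervalIntegral.integral_const_mul, integral_rpow (Or.inl (by linarith)),
        show p - 1 + 1 = p by ring, Real.zero_rpow hp0.ne', sub_zero]
      field_simp
    -- the truncation kernels
    set K₁ : ℝ → ℝ≥0∞ := fun s => ∫⁻ x in Set.Ioi (0:ℝ),
      ENNReal.ofReal ((if s < ‖f' x‖ then ‖f' x‖ else 0) * Ac x) with hK₁
    set K₂ : ℝ → ℝ≥0∞ := fun s => ∫⁻ x in Set.Ioi (0:ℝ),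
      ENNReal.ofReal ((if s < ‖f' x‖ then 0 else ‖f' x‖ ^ (2:ℝ)) * Ac x)
      with hK₂
    have habsmeas : Measurable fun x => ‖f' x‖ :=
      continuous_norm.measurable.comp hf'meas
    have hker1 : Measurable (Function.uncurry (fun t x : ℝ =>
        ENNReal.ofReal (t ^ (p-2)) * ENNReal.ofReal
          ((if t < ‖f' x‖ then ‖f' x‖ else 0) * Ac x))) := by
      apply Measurable.fun_mul
      · exact ((measurable_fst.pow_const _)).ennreal_ofReal
      · exact ((Measurable.ite (measurableSet_lt measurable_fst (habsmeas.comp measurable_snd))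
          (habsmeas.comp measurable_snd) measurable_const).mul
          (hAcmeas.comp measurable_snd)).ennreal_ofReal
    have hker2 : Measurable (Function.uncurry (fun t x : ℝ =>
        ENNReal.ofReal (t ^ (p-3)) * ENNReal.ofReal
          ((if t < ‖f' x‖ then 0 else ‖f' x‖ ^ (2:ℝ)) * Ac x))) := by
      apply Measurable.fun_mul
      · exact ((measurable_fst.pow_const _)).ennreal_ofReal
      · exact ((Measurable.ite (measurableSet_lt measurable_fst (habsmeas.comp measurable_snd))
          measurable_const ((habsmeas.comp measurable_snd).pow_const _)).mul
          (hAcmeas.comp measurable_snd)).ennreal_ofReal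
    have hK₁meas : Measurable K₁ := by
      simp only [hK₁]
      exact Measurable.lintegral_prod_right' (f := Function.uncurry (fun s x : ℝ =>
        ENNReal.ofReal ((if s < ‖f' x‖ then ‖f' x‖ else 0) * Ac x)))
        (((Measurable.ite (measurableSet_lt measurable_fst (habsmeas.comp measurable_snd))
          (habsmeas.comp measurable_snd) measurable_const).mul
          (hAcmeas.comp measurable_snd)).ennreal_ofReal)
    have hK₂meas : Measurable K₂ := by
      simp only [hK₂]
      exact Measurable.lintegral_prod_right' (f := Function.uncurry (fun s x : ℝ =>
        ENNReal.ofReal ((if s < ‖f' x‖ then 0 else ‖f' x‖ ^ (2:ℝ)) * Ac x)))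
        (((Measurable.ite (measurableSet_lt measurable_fst (habsmeas.comp measurable_snd))
          measurable_const ((habsmeas.comp measurable_snd).pow_const _)).mul
          (hAcmeas.comp measurable_snd)).ennreal_ofReal)
    -- the key distributional bound
    have key : ∀ s : ℝ, 0 < s → μ {a | s < h a}
        ≤ ENNReal.ofReal (4 * S.k₂ / s) * K₁ s + ENNReal.ofReal (4 / s ^ 2) * K₂ s := by
      intro s hs
      set f₁ : ℝ → ℂ := fun y => if s < ‖f' y‖ then f' y else 0 with hf₁
      set f₂ : ℝ → ℂ := fun y => f y - f₁ y with hf₂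
      have hf₁meas : Measurable f₁ :=
        Measurable.ite (measurableSet_lt measurable_const habsmeas) hf'meas measurable_const
      have habs_f₁ : ∀ y, ‖f₁ y‖
          = if s < ‖f' y‖ then ‖f' y‖ else 0 := by
        intro y; by_cases hy : s < ‖f' y‖
        · simp only [hf₁, if_pos hy]
        · simp only [hf₁, if_neg hy, norm_zero]
      have mem1 : MemW S.A 1 f₁ := by
        refine ⟨hf₁meas.aemeasurable, ?_⟩
        apply Integrable.mono (g := fun x => s ^ (1 - p) * (‖f x‖ ^ p * S.A x))
          (hfi.const_mul _)
        · exact (((measurable_id.pow_const (1:ℝ)).comp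
            (continuous_norm.measurable.comp hf₁meas)).aemeasurable.mul
            aemeasA).aestronglyMeasurable
        · filter_upwards [hff', ae_restrict_mem measurableSet_Ioi] with x hfx hmem
          have hA0 : 0 ≤ S.A x := hAnn x (le_of_lt hmem)
          rw [Real.norm_eq_abs, Real.norm_eq_abs]
          have hrhs0 : 0 ≤ s ^ (1 - p) * (‖f x‖ ^ p * S.A x) := by positivity
          rw [abs_of_nonneg hrhs0]
          rcases lt_or_ge s (‖f' x‖) with hcase | hcase
          · have hval : ‖f₁ x‖ = ‖f' x‖ := by
              rw [habs_f₁, if_pos hcase]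
            have hfpos : 0 < ‖f' x‖ := lt_trans hs hcase
            have hle : ‖f' x‖ ≤ s ^ (1-p) * ‖f' x‖ ^ p := by
              have h1 : s ^ (p-1) ≤ ‖f' x‖ ^ (p-1) :=
                Real.rpow_le_rpow hs.le hcase.le (by linarith)
              have h2 : s ^ (1-p) = (s ^ (p-1))⁻¹ := by
                rw [show (1-p) = -(p-1) by ring, Real.rpow_neg hs.le]
              have h3 : ‖f' x‖ ^ p
                  = ‖f' x‖ ^ (p-1) * ‖f' x‖ := by
                rw [← Real.rpow_add_one hfpos.ne', sub_add_cancel]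
              rw [h2, h3, ← div_eq_inv_mul, le_div_iff₀ (by positivity)]
              calc ‖f' x‖ * s ^ (p-1)
                  ≤ ‖f' x‖ * ‖f' x‖ ^ (p-1) :=
                    mul_le_mul_of_nonneg_left h1 hfpos.le
                _ = ‖f' x‖ ^ (p-1) * ‖f' x‖ := mul_comm _ _
            have hlhs0 : 0 ≤ ‖f₁ x‖ ^ (1:ℝ) * S.A x := by positivity
            rw [abs_of_nonneg hlhs0, Real.rpow_one, hval, hfx]
            calc ‖f' x‖ * S.A x
                ≤ (s ^ (1-p) * ‖f' x‖ ^ p) * S.A x :=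
                  mul_le_mul_of_nonneg_right hle hA0
              _ = s ^ (1 - p) * (‖f' x‖ ^ p * S.A x) := by ring
          · have hval : ‖f₁ x‖ = 0 := by rw [habs_f₁, if_neg (not_lt.mpr hcase)]
            rw [hval, Real.rpow_one, zero_mul, abs_zero]
            positivity
      have mem2 : MemW S.A 2 f₂ := by
        have hf₂ae : AEMeasurable f₂ (volume.restrict (Set.Ioi 0)) :=
          hfm.sub hf₁meas.aemeasurable
        refine ⟨hf₂ae, ?_⟩
        apply Integrable.mono (g := fun x => s ^ (2 - p) * (‖f x‖ ^ p * S.A x))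
          (hfi.const_mul _)
        · exact (((measurable_id.pow_const (2:ℝ)).comp_aemeasurable
            (continuous_norm.measurable.comp_aemeasurable hf₂ae)).mul
            aemeasA).aestronglyMeasurable
        · filter_upwards [hff', ae_restrict_mem measurableSet_Ioi] with x hfx hmem
          have hA0 : 0 ≤ S.A x := hAnn x (le_of_lt hmem)
          rw [Real.norm_eq_abs, Real.norm_eq_abs]
          have hrhs0 : 0 ≤ s ^ (2 - p) * (‖f x‖ ^ p * S.A x) := by positivity
          rw [abs_of_nonneg hrhs0]
          have hlhs0 : 0 ≤ ‖f₂ x‖ ^ (2:ℝ) * S.A x := by positivity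
          rw [abs_of_nonneg hlhs0]
          have hf₂x : f₂ x = if s < ‖f' x‖ then 0 else f' x := by
            simp only [hf₂, hf₁, hfx]
            by_cases hc : s < ‖f' x‖
            · rw [if_pos hc, if_pos hc, sub_self]
            · rw [if_neg hc, if_neg hc, sub_zero]
          rcases lt_or_ge s (‖f' x‖) with hcase | hcase
          · rw [hf₂x, if_pos hcase, norm_zero, Real.zero_rpow (by norm_num : (2:ℝ) ≠ 0), zero_mul]
            positivity
          · rw [hf₂x, if_neg (not_lt.mpr hcase)]
            rcases eq_or_lt_of_le (norm_nonneg (f' x)) with hzero | hpos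
            · rw [← hzero, Real.zero_rpow (by norm_num : (2:ℝ) ≠ 0), zero_mul]
              positivity
            · have h1 : ‖f' x‖ ^ (2-p) ≤ s ^ (2-p) :=
                Real.rpow_le_rpow (norm_nonneg _) hcase (by linarith)
              have h2 : ‖f' x‖ ^ (2:ℝ)
                  = ‖f' x‖ ^ (2-p) * ‖f' x‖ ^ p := by
                rw [← Real.rpow_add hpos, sub_add_cancel]
              rw [h2, hfx]
              calc ‖f' x‖ ^ (2-p) * ‖f' x‖ ^ p * S.A x
                  ≤ s ^ (2-p) * ‖f' x‖ ^ p * S.A x := by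
                    apply mul_le_mul_of_nonneg_right (mul_le_mul_of_nonneg_right h1 (by positivity)) hA0
                _ = s ^ (2 - p) * (‖f' x‖ ^ p * S.A x) := by ring
      -- splitting via the Fourier transform
      have hFT2 : ∀ lam, S.FT f₂ lam = S.FT f lam - S.FT f₁ lam := fun lam => S.hFT_sub f f₁ lam
      have habs : ∀ lam, ‖S.FT f lam‖
          ≤ ‖S.FT f₁ lam‖ + ‖S.FT f₂ lam‖ := by
        intro lam
        have h1 : S.FT f lam = S.FT f₁ lam + S.FT f₂ lam := by rw [hFT2 lam]; ring
        rw [h1]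
        exact norm_add_le _ _
      set E₁ : Set ℝ := {a | s/2 < g a * ‖S.FT f₁ a‖} with hE₁
      set E₂ : Set ℝ := {a | s/2 < g a * ‖S.FT f₂ a‖} with hE₂
      have hE₂m : MeasurableSet E₂ := measurableSet_lt measurable_const
        (hgmeas.mul (continuous_norm.measurable.comp (S.hFT_meas f₂)))
      have hgpos_of : ∀ (a : ℝ) (F : ℝ), 0 ≤ F → s/2 < g a * F → 0 < g a := by
        intro a F hF hlt
        by_contra hg0
        push_neg at hg0
        nlinarith [mul_nonneg (neg_nonneg.mpr hg0) hF]
      have hincl : {a | s < h a} ⊆ E₁ ∪ E₂ := by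
        intro a ha
        simp only [mem_setOf_eq, hh] at ha
        by_contra hcon
        simp only [mem_union, hE₁, hE₂, mem_setOf_eq, not_or, not_lt] at hcon
        obtain ⟨h1, h2⟩ := hcon
        have hga : 0 < g a := by
          by_contra hg0
          push_neg at hg0
          nlinarith [mul_nonneg (neg_nonneg.mpr hg0) (norm_nonneg (S.FT f a))]
        nlinarith [mul_le_mul_of_nonneg_left (habs a) hga.le, mul_add (g a)
          (‖S.FT f₁ a‖) (‖S.FT f₂ a‖)]
      have hsplit : μ {a | s < h a} ≤ μ E₁ + μ E₂ :=
        le_trans (measure_mono hincl) (measure_union_le _ _)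
      -- the first term
      set M : ℝ := wLpNorm S.A 1 f₁ with hM
      have hMval : M = ∫ x in Set.Ioi (0:ℝ), ‖f₁ x‖ ^ (1:ℝ) * S.A x := by
        rw [hM, wLpNorm]; norm_num
      have hMnn : 0 ≤ M := by
        rw [hMval]
        apply setIntegral_nonneg measurableSet_Ioi
        intro x hx
        exact mul_nonneg (Real.rpow_nonneg (norm_nonneg _) _) (hAnn x hx.le)
      have hKM : ENNReal.ofReal M = K₁ s := by
        rw [hMval, ofReal_integral_eq_lintegral_ofReal mem1.2 ?_]
        · apply setLIntegral_congr_fun measurableSet_Ioi ?_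
          intro x hx
          beta_reduce
          rw [Real.rpow_one, habs_f₁, hAeq x hx.le]
        · filter_upwards [ae_restrict_mem measurableSet_Ioi] with x hx
          exact mul_nonneg (Real.rpow_nonneg (norm_nonneg _) _) (hAnn x hx.le)
      have hFT1le : ∀ lam, ‖S.FT f₁ lam‖ ≤ M := fun lam => S.hFT_sup f₁ mem1 lam
      have term1 : μ E₁ ≤ ENNReal.ofReal (4 * S.k₂ / s) * K₁ s := by
        rcases eq_or_lt_of_le hMnn with hM0 | hM0
        · have hE₁empty : E₁ = ∅ := by
            ext a
            simp only [hE₁, mem_setOf_eq, mem_empty_iff_false, iff_false, not_lt]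
            have hF1 : ‖S.FT f₁ a‖ = 0 :=
              le_antisymm (le_trans (hFT1le a) hM0.symm.le) (norm_nonneg _)
            rw [hF1, mul_zero]
            positivity
          rw [hE₁empty, measure_empty]
          exact zero_le
        · have hsubE : E₁ ⊆ {x | s/(2*M) < g x} := by
            intro a ha
            simp only [hE₁, mem_setOf_eq] at ha
            simp only [mem_setOf_eq]
            have hga : 0 < g a := hgpos_of a _ (norm_nonneg _) ha
            have h1 : g a * ‖S.FT f₁ a‖ ≤ g a * M :=
              mul_le_mul_of_nonneg_left (hFT1le a) hga.le
            rw [div_lt_iff₀ (by positivity)]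
            nlinarith
          calc μ E₁ ≤ μ {x | s/(2*M) < g x} := measure_mono hsubE
            _ = ∫⁻ x in {x | s/(2*M) < g x} ∩ Set.Ioi 0, dens x :=
                hμE _ (measurableSet_lt measurable_const hgmeas)
            _ ≤ ENNReal.ofReal (2 * S.k₂ / (s/(2*M))) := by
                have hw := HLaux.weak_bound S.hα S.hk S.hk₂ (fun x hx => (S.hcden_lo x hx).2)
                  (fun x hx => (S.hcden_hi x hx).2) (t := s/(2*M)) (by positivity)
                simp only [hgx] at hw
                simp only [hdens]
                exact hw
            _ = ENNReal.ofReal (4 * S.k₂ / s) * ENNReal.ofReal M := by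
                have hk₂ := S.hk₂
                rw [← ENNReal.ofReal_mul (by positivity)]
                congr 1
                field_simp
                ring
            _ = ENNReal.ofReal (4 * S.k₂ / s) * K₁ s := by rw [hKM]
      -- the second term
      have term2 : μ E₂ ≤ ENNReal.ofReal (4 / s ^ 2) * K₂ s := by
        have hPlan := S.hPlancherel f₂ mem2
        have hK2eq : ∫⁻ x in Set.Ioi (0:ℝ),
            ENNReal.ofReal (‖f₂ x‖ ^ (2:ℝ) * S.A x) = K₂ s := by
          apply lintegral_congr_ae
          filter_upwards [hff', ae_restrict_mem measurableSet_Ioi] with x hfx hx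
          congr 1
          have hf₂x : f₂ x = if s < ‖f' x‖ then 0 else f' x := by
            simp only [hf₂, hf₁, hfx]
            by_cases hc : s < ‖f' x‖
            · rw [if_pos hc, if_pos hc, sub_self]
            · rw [if_neg hc, if_neg hc, sub_zero]
          rw [hf₂x, hAeq x hx.le]
          by_cases hc : s < ‖f' x‖
          · rw [if_pos hc, if_pos hc, norm_zero, Real.zero_rpow (by norm_num : (2:ℝ) ≠ 0)]
          · rw [if_neg hc, if_neg hc]
        calc μ E₂ = ∫⁻ x in E₂ ∩ Set.Ioi 0, dens x := hμE _ hE₂m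
          _ ≤ ∫⁻ x in E₂ ∩ Set.Ioi 0,
              ENNReal.ofReal (4 / s^2 * (‖S.FT f₂ x‖ ^ (2:ℝ) * S.cden x)) := by
              apply setLIntegral_mono
              · exact (measurable_const.mul
                  (((continuous_norm.measurable.comp (S.hFT_meas f₂)).pow_const _).mul
                    S.hcden_cont.measurable)).ennreal_ofReal
              · rintro x ⟨hxE, hx0⟩
                simp only [hE₂, mem_setOf_eq] at hxE
                have hga := hgpos x hx0
                have hF2 : 0 < ‖S.FT f₂ x‖ := by
                  nlinarith [norm_nonneg (S.FT f₂ x)]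
                simp only [hdens]
                apply ENNReal.ofReal_le_ofReal
                have e1 : g x ^ (-2:ℝ) = (g x ^ (2:ℕ))⁻¹ := by
                  rw [← Real.rpow_natCast (g x) 2, ← Real.rpow_neg hga.le]
                  norm_num
                have e2 : ‖S.FT f₂ x‖ ^ (2:ℝ)
                    = ‖S.FT f₂ x‖ ^ (2:ℕ) := Real.rpow_natCast _ 2
                rw [e1, e2]
                have h4 : s^2 ≤ 4 * (g x * ‖S.FT f₂ x‖)^2 := by nlinarith
                have hx2 : (g x ^ (2:ℕ))⁻¹ ≤ 4 / s^2 * ‖S.FT f₂ x‖ ^ (2:ℕ) := by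
                  rw [inv_eq_one_div,
                    show 4 / s^2 * ‖S.FT f₂ x‖ ^ (2:ℕ)
                      = (4 * ‖S.FT f₂ x‖ ^ (2:ℕ)) / s^2 by ring,
                    div_le_div_iff₀ (by positivity) (by positivity)]
                  nlinarith
                calc (g x ^ (2:ℕ))⁻¹ * S.cden x
                    ≤ (4 / s^2 * ‖S.FT f₂ x‖ ^ (2:ℕ)) * S.cden x :=
                      mul_le_mul_of_nonneg_right hx2 (hcnn x)
                  _ = 4 / s^2 * (‖S.FT f₂ x‖ ^ (2:ℕ) * S.cden x) := by ring
          _ ≤ ∫⁻ x in Set.Ioi (0:ℝ),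
              ENNReal.ofReal (4 / s^2 * (‖S.FT f₂ x‖ ^ (2:ℝ) * S.cden x)) :=
              lintegral_mono_set inter_subset_right
          _ = ENNReal.ofReal (4 / s^2) * ∫⁻ x in Set.Ioi (0:ℝ),
              ENNReal.ofReal (‖S.FT f₂ x‖ ^ (2:ℝ) * S.cden x) := by
              rw [← lintegral_const_mul' _ _ ENNReal.ofReal_ne_top]
              apply setLIntegral_congr_fun measurableSet_Ioi ?_
              intro x hx
              beta_reduce
              rw [← ENNReal.ofReal_mul (by positivity)]
          _ = ENNReal.ofReal (4 / s^2) * K₂ s := by rw [hPlan, hK2eq]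
      calc μ {a | s < h a} ≤ μ E₁ + μ E₂ := hsplit
        _ ≤ ENNReal.ofReal (4 * S.k₂ / s) * K₁ s + ENNReal.ofReal (4 / s ^ 2) * K₂ s :=
            add_le_add term1 term2
    -- Tonelli bounds
    have T1bound : ∫⁻ t in Set.Ioi (0:ℝ), ENNReal.ofReal (t^(p-2)) * K₁ t
        ≤ ENNReal.ofReal ((p-1)⁻¹) * ENNReal.ofReal Np := by
      calc ∫⁻ t in Set.Ioi (0:ℝ), ENNReal.ofReal (t^(p-2)) * K₁ t
          = ∫⁻ t in Set.Ioi (0:ℝ), ∫⁻ x in Set.Ioi (0:ℝ), ENNReal.ofReal (t^(p-2)) *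
              ENNReal.ofReal ((if t < ‖f' x‖ then ‖f' x‖ else 0) * Ac x) :=
            lintegral_congr (fun t => (lintegral_const_mul' _ _ ENNReal.ofReal_ne_top).symm)
        _ = ∫⁻ x in Set.Ioi (0:ℝ), ∫⁻ t in Set.Ioi (0:ℝ), ENNReal.ofReal (t^(p-2)) *
              ENNReal.ofReal ((if t < ‖f' x‖ then ‖f' x‖ else 0) * Ac x) :=
            lintegral_lintegral_swap hker1.aemeasurable
        _ ≤ ∫⁻ x in Set.Ioi (0:ℝ),
              ENNReal.ofReal ((p-1)⁻¹ * (‖f' x‖ ^ p * Ac x)) := by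
            apply lintegral_mono_ae
            filter_upwards [ae_restrict_mem measurableSet_Ioi] with x hx
            exact HLaux.inner_T1 hp (norm_nonneg _) (hAcnn x hx.le)
        _ = ENNReal.ofReal ((p-1)⁻¹) * ∫⁻ x in Set.Ioi (0:ℝ),
              ENNReal.ofReal (‖f' x‖ ^ p * Ac x) := by
            rw [← lintegral_const_mul' _ _ ENNReal.ofReal_ne_top]
            apply setLIntegral_congr_fun measurableSet_Ioi ?_
            intro x hx
            beta_reduce
            have hp1 : (0:ℝ) < p - 1 := by linarith
            rw [← ENNReal.ofReal_mul (by positivity)]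
        _ ≤ ENNReal.ofReal ((p-1)⁻¹) * ENNReal.ofReal Np := by
            apply mul_le_mul_right
            rw [← hNpl]
            apply le_of_eq
            apply lintegral_congr_ae
            filter_upwards [hff', ae_restrict_mem measurableSet_Ioi] with x hfx hx
            rw [hfx, hAeq x hx.le]
    have T2bound : ∫⁻ t in Set.Ioi (0:ℝ), ENNReal.ofReal (t^(p-3)) * K₂ t
        ≤ ENNReal.ofReal ((2-p)⁻¹) * ENNReal.ofReal Np := by
      calc ∫⁻ t in Set.Ioi (0:ℝ), ENNReal.ofReal (t^(p-3)) * K₂ t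
          = ∫⁻ t in Set.Ioi (0:ℝ), ∫⁻ x in Set.Ioi (0:ℝ), ENNReal.ofReal (t^(p-3)) *
              ENNReal.ofReal ((if t < ‖f' x‖ then 0
                else ‖f' x‖ ^ (2:ℝ)) * Ac x) :=
            lintegral_congr (fun t => (lintegral_const_mul' _ _ ENNReal.ofReal_ne_top).symm)
        _ = ∫⁻ x in Set.Ioi (0:ℝ), ∫⁻ t in Set.Ioi (0:ℝ), ENNReal.ofReal (t^(p-3)) *
              ENNReal.ofReal ((if t < ‖f' x‖ then 0
                else ‖f' x‖ ^ (2:ℝ)) * Ac x) :=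
            lintegral_lintegral_swap hker2.aemeasurable
        _ ≤ ∫⁻ x in Set.Ioi (0:ℝ),
              ENNReal.ofReal ((2-p)⁻¹ * (‖f' x‖ ^ p * Ac x)) := by
            apply lintegral_mono_ae
            filter_upwards [ae_restrict_mem measurableSet_Ioi] with x hx
            exact HLaux.inner_T2 hp hplt (norm_nonneg _) (hAcnn x hx.le)
        _ = ENNReal.ofReal ((2-p)⁻¹) * ∫⁻ x in Set.Ioi (0:ℝ),
              ENNReal.ofReal (‖f' x‖ ^ p * Ac x) := by
            rw [← lintegral_const_mul' _ _ ENNReal.ofReal_ne_top]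
            apply setLIntegral_congr_fun measurableSet_Ioi ?_
            intro x hx
            beta_reduce
            have hp1 : (0:ℝ) < 2 - p := by linarith
            rw [← ENNReal.ofReal_mul (by positivity)]
        _ ≤ ENNReal.ofReal ((2-p)⁻¹) * ENNReal.ofReal Np := by
            apply mul_le_mul_right
            rw [← hNpl]
            apply le_of_eq
            apply lintegral_congr_ae
            filter_upwards [hff', ae_restrict_mem measurableSet_Ioi] with x hfx hx
            rw [hfx, hAeq x hx.le]
    -- final assembly
    simp only [hgx]
    calc ∫⁻ x in Set.Ioi (0:ℝ),
          ENNReal.ofReal (g x ^ (p - 2) * ‖S.FT f x‖ ^ p * S.cden x)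
        = ∫⁻ x, ENNReal.ofReal (h x ^ p) ∂μ := step1
      _ = ∫⁻ t in Set.Ioi (0:ℝ), μ {a | t < h a} * ENNReal.ofReal (p * t ^ (p-1)) := step2'
      _ ≤ ∫⁻ t in Set.Ioi (0:ℝ), (ENNReal.ofReal (4 * S.k₂ / t) * K₁ t
            + ENNReal.ofReal (4 / t ^ 2) * K₂ t) * ENNReal.ofReal (p * t ^ (p-1)) := by
          apply lintegral_mono_ae
          filter_upwards [ae_restrict_mem measurableSet_Ioi] with t ht
          exact mul_le_mul_left (key t ht) _
      _ = ∫⁻ t in Set.Ioi (0:ℝ), (ENNReal.ofReal (4 * S.k₂ * p) * (ENNReal.ofReal (t^(p-2)) * K₁ t)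
            + ENNReal.ofReal (4 * p) * (ENNReal.ofReal (t^(p-3)) * K₂ t)) := by
          apply setLIntegral_congr_fun measurableSet_Ioi ?_
          intro t ht
          beta_reduce
          rw [add_mul]
          have ht0 : (0:ℝ) < t := ht
          have hk₂ := S.hk₂
          congr 1
          · rw [mul_right_comm, ← ENNReal.ofReal_mul (by positivity)]
            rw [show 4 * S.k₂ / t * (p * t ^ (p-1)) = 4 * S.k₂ * p * t ^ (p-2) by
              rw [show p - 2 = (p-1) + (-1) by ring, Real.rpow_add ht0, Real.rpow_neg_one,
                div_eq_mul_inv]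
              ring]
            rw [ENNReal.ofReal_mul (by positivity), mul_assoc]
          · rw [mul_right_comm, ← ENNReal.ofReal_mul (by positivity)]
            rw [show 4 / t^2 * (p * t ^ (p-1)) = 4 * p * t ^ (p-3) by
              rw [show p - 3 = (p-1) + (-2) by ring, Real.rpow_add ht0,
                show t ^ (-2:ℝ) = (t^2)⁻¹ by
                  rw [← Real.rpow_natCast t 2, ← Real.rpow_neg ht0.le]
                  norm_num,
                div_eq_mul_inv]
              ring]
            rw [ENNReal.ofReal_mul (by positivity), mul_assoc]
      _ = ENNReal.ofReal (4 * S.k₂ * p) * (∫⁻ t in Set.Ioi (0:ℝ), ENNReal.ofReal (t^(p-2)) * K₁ t)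
          + ENNReal.ofReal (4 * p) * (∫⁻ t in Set.Ioi (0:ℝ), ENNReal.ofReal (t^(p-3)) * K₂ t) := by
          rw [lintegral_add_left (f := fun t : ℝ =>
              ENNReal.ofReal (4 * S.k₂ * p) * (ENNReal.ofReal (t^(p-2)) * K₁ t))
              (measurable_const.mul (((measurable_id'.pow_const _).ennreal_ofReal).mul hK₁meas)),
            lintegral_const_mul' _ _ ENNReal.ofReal_ne_top,
            lintegral_const_mul' _ _ ENNReal.ofReal_ne_top]
      _ ≤ ENNReal.ofReal (4 * S.k₂ * p) * (ENNReal.ofReal ((p-1)⁻¹) * ENNReal.ofReal Np)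
          + ENNReal.ofReal (4 * p) * (ENNReal.ofReal ((2-p)⁻¹) * ENNReal.ofReal Np) :=
          add_le_add (mul_le_mul_right T1bound _) (mul_le_mul_right T2bound _)
      _ ≤ ENNReal.ofReal (c * Np) := by
          have hp1 : (0:ℝ) < p - 1 := by linarith
          have hp2' : (0:ℝ) < 2 - p := by linarith
          have hk₂ := S.hk₂
          rw [← ENNReal.ofReal_mul (by positivity), ← ENNReal.ofReal_mul (by positivity),
            ← ENNReal.ofReal_mul (by positivity), ← ENNReal.ofReal_mul (by positivity),
            ← ENNReal.ofReal_add (by positivity) (by positivity)]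
          apply ENNReal.ofReal_le_ofReal
          have heq : 4 * S.k₂ * p * ((p-1)⁻¹ * Np) + 4 * p * ((2-p)⁻¹ * Np)
              = (4 * S.k₂ * p / (p - 1) + 4 * p / (2 - p)) * Np := by
            rw [div_eq_mul_inv, div_eq_mul_inv]
            ring
          rw [heq, hcdef]
          nlinarith
end

section
/- Weak-type (1,1) level-set estimate, case ρ > 0 (from the proof of Lemma 1): Let α > −1/2, k > 0, k₂ > 0, and let w : ℝ₊ → ℝ be measurable with 0 ≤ w(x) ≤ k₂ x² for 0 < x ≤ k and 0 ≤ w(x) ≤ k₂ x^{2α+1} for x > k. Define g(x) = x³ for 0 < x ≤ k and g(x) = x^{2(α+1)} for x > k. Then there is a constant c > 0 depending only on α, k and k₂ such that for all λ > 0 and M > 0, ∫_{{x > 0 : g(x) M > λ}} w(x) (g(x))^{−2} dx ≤ c M/λ. -/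
open MeasureTheory Set

/-! On each of the two regimes the weight satisfies `w ≤ K x^(a-1)` where `g = x^a`, so
`w / g² ≤ K x^(-a-1)`, and the superlevel set `{g > λ/M}` is a half-line `(r^(1/a), ∞)` with
`r = λ/M`. The tail integral of `x^(-a-1)` over it is exactly `1/(a r) = M/(a λ)`. -/

theorem setLIntegral_superlevel_rpow_neg {a r : ℝ} (ha : 0 < a) (hr : 0 < r) :
    ∫⁻ x in {x : ℝ | 0 < x ∧ r < x ^ a}, ENNReal.ofReal (x ^ (-(a + 1)))
      = ENNReal.ofReal (1 / (a * r)) := by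
  have ha₀ : a ≠ 0 := ha.ne'
  have hc : 0 < r ^ a⁻¹ := Real.rpow_pos_of_pos hr _
  have hset : {x : ℝ | 0 < x ∧ r < x ^ a} = Ioi (r ^ a⁻¹) := by
    ext x
    constructor
    · rintro ⟨hx, hrx⟩
      exact (Real.rpow_inv_lt_iff_of_pos hr.le hx.le ha).2 hrx
    · intro hx
      have hx0 : 0 < x := hc.trans hx
      exact ⟨hx0, (Real.rpow_inv_lt_iff_of_pos hr.le hx0.le ha).1 hx⟩
  have hexp : -(a + 1) < -1 := by linarith
  have hnonneg : 0 ≤ᵐ[volume.restrict (Ioi (r ^ a⁻¹))] fun x : ℝ ↦ x ^ (-(a + 1)) := by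
    filter_upwards [ae_restrict_mem measurableSet_Ioi] with x hx
    exact Real.rpow_nonneg (hc.trans hx).le _
  rw [hset, ← ofReal_integral_eq_lintegral_ofReal (integrableOn_Ioi_rpow_of_lt hexp hc) hnonneg,
    integral_Ioi_rpow_of_lt hexp hc, show -(a + 1) + 1 = -a by ring, ← Real.rpow_mul hr.le,
    mul_neg, inv_mul_cancel₀ ha₀, Real.rpow_neg_one]
  congr 1
  field_simp

theorem mul_rpow_neg_two_le {w x a K : ℝ} (hx : 0 < x) (hw : w ≤ K * x ^ (a - 1)) :
    w * (x ^ a) ^ (-2 : ℝ) ≤ K * x ^ (-(a + 1)) :=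
  calc w * (x ^ a) ^ (-2 : ℝ) ≤ K * x ^ (a - 1) * (x ^ a) ^ (-2 : ℝ) :=
        mul_le_mul_of_nonneg_right hw (by positivity)
    _ = K * x ^ (-(a + 1)) := by
        rw [← Real.rpow_mul hx.le, mul_assoc, ← Real.rpow_add hx]
        ring_nf

theorem setLIntegral_ofReal_mul_rpow_neg_two_le {s : Set ℝ} {w g : ℝ → ℝ} {a r K : ℝ}
    (ha : 0 < a) (hr : 0 < r) (hK : 0 ≤ K)
    (hs : ∀ x ∈ s, 0 < x ∧ g x = x ^ a ∧ r < g x ∧ w x ≤ K * x ^ (a - 1)) :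
    ∫⁻ x in s, ENNReal.ofReal (w x * g x ^ (-2 : ℝ)) ≤ ENNReal.ofReal (K / (a * r)) :=
  calc ∫⁻ x in s, ENNReal.ofReal (w x * g x ^ (-2 : ℝ))
      ≤ ∫⁻ x in s, ENNReal.ofReal K * ENNReal.ofReal (x ^ (-(a + 1))) := by
        refine setLIntegral_mono (by fun_prop) fun x hx ↦ ?_
        obtain ⟨hx0, hgx, -, hwx⟩ := hs x hx
        rw [← ENNReal.ofReal_mul hK, hgx]
        exact ENNReal.ofReal_le_ofReal (mul_rpow_neg_two_le hx0 hwx)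
    _ ≤ ∫⁻ x in {x : ℝ | 0 < x ∧ r < x ^ a},
          ENNReal.ofReal K * ENNReal.ofReal (x ^ (-(a + 1))) :=
        lintegral_mono_set fun x hx ↦ by
          obtain ⟨hx0, hgx, hrx, -⟩ := hs x hx
          exact ⟨hx0, hgx ▸ hrx⟩
    _ = ENNReal.ofReal (K / (a * r)) := by
        rw [lintegral_const_mul _ (by fun_prop), setLIntegral_superlevel_rpow_neg ha hr,
          ← ENNReal.ofReal_mul hK, mul_one_div]

theorem weak_type_levelset_rho_pos_general (α k k₂ : ℝ) (hα : -(1/2) < α)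
    (hk₂ : 0 < k₂) :
    ∃ c > (0 : ℝ), ∀ w : ℝ → ℝ, Measurable w →
      (∀ x : ℝ, 0 < x → x ≤ k → 0 ≤ w x ∧ w x ≤ k₂ * x ^ (2 : ℝ)) →
      (∀ x : ℝ, k < x → 0 ≤ w x ∧ w x ≤ k₂ * x ^ (2 * α + 1)) →
      ∀ lam > (0 : ℝ), ∀ M > (0 : ℝ),
        ∫⁻ x in {x : ℝ | 0 < x ∧
              lam < (if x ≤ k then x ^ (3 : ℝ) else x ^ (2 * (α + 1))) * M},
            ENNReal.ofReal
              (w x * (if x ≤ k then x ^ (3 : ℝ) else x ^ (2 * (α + 1))) ^ (-(2 : ℝ)))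
          ≤ ENNReal.ofReal (c * M / lam) := by
  have hβ : (0 : ℝ) < 2 * (α + 1) := by linarith
  refine ⟨k₂ / 3 + k₂ / (2 * (α + 1)), by positivity, ?_⟩
  intro w _ hw_small hw_large lam hlam M hM
  have hr : 0 < lam / M := div_pos hlam hM
  rw [← lintegral_inter_add_sdiff _ _ measurableSet_Iic]
  calc _ ≤ ENNReal.ofReal (k₂ / (3 * (lam / M)))
        + ENNReal.ofReal (k₂ / (2 * (α + 1) * (lam / M))) := by
        gcongr
        · refine setLIntegral_ofReal_mul_rpow_neg_two_le (by norm_num) hr hk₂.le ?_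
          rintro x ⟨⟨hx0, hlevel⟩, hxk : x ≤ k⟩
          rw [if_pos hxk] at hlevel ⊢
          refine ⟨hx0, rfl, (div_lt_iff₀ hM).2 hlevel, ?_⟩
          convert (hw_small x hx0 hxk).2 using 3
          norm_num
        · refine setLIntegral_ofReal_mul_rpow_neg_two_le hβ hr hk₂.le ?_
          rintro x ⟨⟨hx0, hlevel⟩, hxk : ¬x ≤ k⟩
          rw [if_neg hxk] at hlevel ⊢
          refine ⟨hx0, rfl, (div_lt_iff₀ hM).2 hlevel, ?_⟩
          convert (hw_large x (not_le.1 hxk)).2 using 3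
          ring
    _ = ENNReal.ofReal ((k₂ / 3 + k₂ / (2 * (α + 1))) * M / lam) := by
        rw [← ENNReal.ofReal_add (by positivity) (by positivity)]
        congr 1
        field_simp

/-- **Weak-type (1,1) level-set estimate, case ρ > 0** (from the proof of Lemma 1 of
"Generalized Fourier transform on Chébli-Trimèche hypergroups").
Let `α > -1/2`, `k > 0`, `k₂ > 0`, and let `w : ℝ₊ → ℝ` be measurable with
`0 ≤ w x ≤ k₂ * x ^ 2` for `0 < x ≤ k` and `0 ≤ w x ≤ k₂ * x ^ (2α+1)` for `x > k`.
With `g x = x ^ 3` for `0 < x ≤ k` and `g x = x ^ (2(α+1))` for `x > k`, there is a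
constant `c > 0` (depending only on `α`, `k` and `k₂`) such that for all `λ > 0` and
`M > 0`, `∫_{x > 0 : g x * M > λ} w x * (g x)⁻² dx ≤ c * M / λ`. -/
theorem weak_type_levelset_rho_pos (α k k₂ : ℝ) (hα : -(1/2) < α)
    (hk : 0 < k) (hk₂ : 0 < k₂) :
    ∃ c > (0 : ℝ), ∀ w : ℝ → ℝ, Measurable w →
      (∀ x : ℝ, 0 < x → x ≤ k → 0 ≤ w x ∧ w x ≤ k₂ * x ^ (2 : ℝ)) →
      (∀ x : ℝ, k < x → 0 ≤ w x ∧ w x ≤ k₂ * x ^ (2 * α + 1)) →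
      ∀ lam > (0 : ℝ), ∀ M > (0 : ℝ),
        ∫⁻ x in {x : ℝ | 0 < x ∧
              lam < (if x ≤ k then x ^ (3 : ℝ) else x ^ (2 * (α + 1))) * M},
            ENNReal.ofReal
              (w x * (if x ≤ k then x ^ (3 : ℝ) else x ^ (2 * (α + 1))) ^ (-(2 : ℝ)))
          ≤ ENNReal.ofReal (c * M / lam) :=
  weak_type_levelset_rho_pos_general α k k₂ hα hk₂
end

section
/- Lemma 2, case 1 < p ≤ 2: Let 1 < p ≤ 2 with conjugate exponent p', and let f ∈ L^p_A(ℝ₊) on the Jacobi hypergroup. Then there exists a positive constant c such that for every δ > 0, (∫₀^∞ min{1, (δx)^{2p'}} |𝓕(f)(x)|^{p'} dx/|c(x)|²)^{1/p'} ≤ c ω_{A,p}(f)(δ). -/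
open MeasureTheory Set Filter

/-- The Jacobi hypergroup setting: the Chébli–Trimèche hypergroup `(ℝ₊, ∗(A))` with
`A(x) = 2^(2ρ) (sinh x)^(2α+1) (cosh x)^(2β+1)`, `α ≥ β ≥ -1/2`, `α ≠ -1/2`,
`ρ = α + β + 1`.  Its characters are the Jacobi functions `φ_λ`, satisfying
`|1 - φ_λ(t)| ≥ c₀ min{1, (λt)²}`.  The density `cden = |c(λ)|⁻²` is even, continuous
and comparable to `|λ|^(2α+1)` for `|λ| > k` and to `|λ|²` for `|λ| ≤ k`.  The
generalized Fourier transform `FT` is given on `L¹_A` by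
`𝓕(f)(λ) = ∫₀^∞ f(x) φ_λ(x) A(x) dx`; it satisfies `‖𝓕 f‖_∞ ≤ ‖f‖_{A,1}`, the
Hausdorff–Young inequality, the Hardy–Littlewood inequality of Lemma 1 and the
translation identity `𝓕(τ_δ f)(λ) = φ_λ(δ) 𝓕(f)(λ)`, where the generalized
translations `τ_δ` are `L^p_A`-contractions. -/
structure JacobiHypergroup where
  α : ℝ
  β : ℝ
  ρ : ℝ
  hβα : β ≤ α
  hβ : -(1/2) ≤ β
  hα : α ≠ -(1/2)
  hρ : ρ = α + β + 1
  /-- the weight function `A` of the Jacobi hypergroup -/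
  A : ℝ → ℝ
  hA : ∀ x : ℝ, 0 ≤ x →
    A x = (2 : ℝ) ^ (2 * ρ) * Real.sinh x ^ (2 * α + 1) * Real.cosh x ^ (2 * β + 1)
  /-- the Jacobi functions `φ_λ`, the characters of the hypergroup -/
  φ : ℝ → ℝ → ℂ
  c₀ : ℝ
  hc₀ : 0 < c₀
  hφ_lower : ∀ lam t : ℝ, 0 < t →
    c₀ * min 1 ((lam * t) ^ 2) ≤ ‖1 - φ lam t‖
  /-- the density `|c(λ)|⁻²` of the Plancherel measure -/
  cden : ℝ → ℝ
  hcden_cont : Continuous cden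
  hcden_even : ∀ x : ℝ, cden (-x) = cden x
  k : ℝ
  k₁ : ℝ
  k₂ : ℝ
  hk : 0 < k
  hk₁ : 0 < k₁
  hk₂ : 0 < k₂
  hcden_hi : ∀ x : ℝ, k < |x| →
    k₁ * |x| ^ (2 * α + 1) ≤ cden x ∧ cden x ≤ k₂ * |x| ^ (2 * α + 1)
  hcden_lo : ∀ x : ℝ, |x| ≤ k →
    k₁ * |x| ^ (2 : ℝ) ≤ cden x ∧ cden x ≤ k₂ * |x| ^ (2 : ℝ)
  /-- the generalized Fourier transform -/
  FT : (ℝ → ℂ) → ℝ → ℂ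
  hFT_def : ∀ f : ℝ → ℂ, MemW A 1 f → ∀ lam : ℝ,
    FT f lam = ∫ x in Set.Ioi (0 : ℝ), f x * φ lam x * (A x : ℂ)
  hFT_meas : ∀ f : ℝ → ℂ, Measurable (FT f)
  hFT_sub : ∀ f g : ℝ → ℂ, ∀ lam : ℝ,
    FT (fun y => f y - g y) lam = FT f lam - FT g lam
  /-- `‖𝓕 f‖_∞ ≤ ‖f‖_{A,1}` -/
  hFT_sup : ∀ f : ℝ → ℂ, MemW A 1 f → ∀ lam : ℝ,
    ‖FT f lam‖ ≤ wLpNorm A 1 f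
  /-- the Hausdorff–Young inequality `‖𝓕 f‖_{c,p'} ≤ C ‖f‖_{A,p}` -/
  hHY : ∀ p p' : ℝ, 1 < p → p ≤ 2 → 1 / p + 1 / p' = 1 →
    ∃ C > (0 : ℝ), ∀ f : ℝ → ℂ, MemW A p f →
      (∫⁻ lam in Set.Ioi (0 : ℝ),
          ENNReal.ofReal (‖FT f lam‖ ^ p' * cden lam)) ^ (1 / p')
        ≤ ENNReal.ofReal (C * wLpNorm A p f)
  /-- the Hardy–Littlewood inequality of Lemma 1 (with the piecewise weight
  `g(t) = t³` for `t ≤ k`, `g(t) = t^(2(α+1))` for `t > k`) -/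
  hHL : ∀ p : ℝ, 1 < p → p ≤ 2 →
    ∃ C > (0 : ℝ), ∀ f : ℝ → ℂ, MemW A p f →
      ∫⁻ x in Set.Ioi (0 : ℝ),
          ENNReal.ofReal ((if x ≤ k then x ^ (3 : ℝ) else x ^ (2 * (α + 1))) ^ (p - 2) *
            ‖FT f x‖ ^ p * cden x)
        ≤ ENNReal.ofReal (C * wLpNorm A p f ^ p)
  /-- the generalized translation operators -/
  τ : ℝ → (ℝ → ℂ) → ℝ → ℂ
  hτ_contract : ∀ p : ℝ, 1 ≤ p → ∀ (δ : ℝ) (f : ℝ → ℂ), MemW A p f →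
    MemW A p (τ δ f) ∧ wLpNorm A p (τ δ f) ≤ wLpNorm A p f
  hτ_diff : ∀ p : ℝ, 1 ≤ p → ∀ (δ : ℝ) (f : ℝ → ℂ), MemW A p f →
    MemW A p (fun y => τ δ f y - f y)
  /-- the translation identity `𝓕(τ_δ f)(λ) = φ_λ(δ) 𝓕(f)(λ)` -/
  hτ_FT : ∀ p : ℝ, 1 ≤ p → p ≤ 2 → ∀ (δ : ℝ) (f : ℝ → ℂ), MemW A p f →
    ∀ᵐ lam ∂(volume.restrict (Set.Ioi (0 : ℝ))),
      FT (τ δ f) lam = φ lam δ * FT f lam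

/-- The modulus of continuity of first order, `ω_{A,p}(f)(δ) = ‖τ_δ f - f‖_{A,p}`. -/
noncomputable def JacobiHypergroup.omega (S : JacobiHypergroup) (p : ℝ)
    (f : ℝ → ℂ) (δ : ℝ) : ℝ :=
  wLpNorm S.A p (fun y => S.τ δ f y - f y)

/-! The translation identity gives `𝓕(τ_δ f - f)(λ) = (φ_λ(δ) - 1) 𝓕(f)(λ)`, so the lower
bound `|1 - φ_λ(δ)| ≥ c₀ min{1, (λδ)²}` dominates `min{1, (δλ)^(2p')} |𝓕(f)(λ)|^(p')` by
`c₀^(-p') |𝓕(τ_δ f - f)(λ)|^(p')`; integrating against `|c(λ)|⁻² dλ` and applying the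
Hausdorff–Young inequality to `τ_δ f - f` gives the claim with `c = C_HY / c₀`. -/

theorem Real.min_one_rpow {a q : ℝ} (ha : 0 ≤ a) (hq : 0 ≤ q) :
    min 1 a ^ q = min 1 (a ^ q) := by
  rcases le_total a 1 with h | h
  · rw [min_eq_right h, min_eq_right (Real.rpow_le_one ha h hq)]
  · rw [min_eq_left h, min_eq_left (Real.one_le_rpow h hq), Real.one_rpow]

theorem lintegral_ofReal_mul_rpow_one_div_le {α : Type*} [MeasurableSpace α] {μ : Measure α}
    {F G w : α → ℝ} {a q : ℝ} (ha : 0 ≤ a) (hq : 0 < q) (hw : ∀ᵐ x ∂μ, 0 ≤ w x)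
    (hFG : ∀ᵐ x ∂μ, F x ≤ a ^ q * G x) :
    (∫⁻ x, ENNReal.ofReal (F x * w x) ∂μ) ^ (1 / q)
      ≤ ENNReal.ofReal a * (∫⁻ x, ENNReal.ofReal (G x * w x) ∂μ) ^ (1 / q) := by
  have hint : ∫⁻ x, ENNReal.ofReal (F x * w x) ∂μ
      ≤ ENNReal.ofReal (a ^ q) * ∫⁻ x, ENNReal.ofReal (G x * w x) ∂μ := by
    rw [← lintegral_const_mul' _ _ ENNReal.ofReal_ne_top]
    refine lintegral_mono_ae ?_
    filter_upwards [hw, hFG] with x hwx hFGx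
    rw [← ENNReal.ofReal_mul (Real.rpow_nonneg ha q), ← mul_assoc]
    exact ENNReal.ofReal_le_ofReal (mul_le_mul_of_nonneg_right hFGx hwx)
  have hconst : ENNReal.ofReal (a ^ q) ^ (1 / q) = ENNReal.ofReal a := by
    rw [← ENNReal.ofReal_rpow_of_nonneg ha hq.le, ← ENNReal.rpow_mul, mul_one_div_cancel hq.ne',
      ENNReal.rpow_one]
  calc _ ≤ (ENNReal.ofReal (a ^ q) * ∫⁻ x, ENNReal.ofReal (G x * w x) ∂μ) ^ (1 / q) :=
        ENNReal.rpow_le_rpow hint (by positivity)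
    _ = _ := by rw [ENNReal.mul_rpow_of_nonneg _ _ (by positivity), hconst]

namespace JacobiHypergroup

variable (S : JacobiHypergroup)

theorem cden_nonneg (x : ℝ) : 0 ≤ S.cden x := by
  have hk₁ {r : ℝ} : 0 ≤ S.k₁ * |x| ^ r := mul_nonneg S.hk₁.le (by positivity)
  rcases le_or_gt |x| S.k with h | h
  · exact hk₁.trans (S.hcden_lo x h).1
  · exact hk₁.trans (S.hcden_hi x h).1

theorem min_one_sq_le {t : ℝ} (ht : 0 < t) (lam : ℝ) :
    min 1 ((t * lam) ^ 2) ≤ S.c₀⁻¹ * ‖1 - S.φ lam t‖ := by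
  rw [le_inv_mul_iff₀ S.hc₀, mul_comm t]
  exact S.hφ_lower lam t ht

theorem ae_norm_FT_translate_sub {p : ℝ} (hp : 1 ≤ p) (hp2 : p ≤ 2) (δ : ℝ) {f : ℝ → ℂ}
    (hf : MemW S.A p f) :
    ∀ᵐ lam ∂(volume.restrict (Ioi (0 : ℝ))),
      ‖S.FT (fun y => S.τ δ f y - f y) lam‖ = ‖1 - S.φ lam δ‖ * ‖S.FT f lam‖ := by
  filter_upwards [S.hτ_FT p hp hp2 δ f hf] with lam hlam
  rw [S.hFT_sub, hlam, ← norm_mul, ← norm_neg]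
  ring_nf

theorem ae_min_one_rpow_mul_le {p p' : ℝ} (hp : 1 ≤ p) (hp2 : p ≤ 2) (hp' : 0 ≤ p')
    {δ : ℝ} (hδ : 0 < δ) {f : ℝ → ℂ} (hf : MemW S.A p f) :
    ∀ᵐ lam ∂(volume.restrict (Ioi (0 : ℝ))),
      min 1 ((δ * lam) ^ (2 * p')) * ‖S.FT f lam‖ ^ p'
        ≤ S.c₀⁻¹ ^ p' * ‖S.FT (fun y => S.τ δ f y - f y) lam‖ ^ p' := by
  filter_upwards [S.ae_norm_FT_translate_sub hp hp2 δ hf,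
    self_mem_ae_restrict measurableSet_Ioi] with lam hlam (hlam0 : 0 < lam)
  have hδlam : 0 ≤ (δ * lam) ^ 2 := sq_nonneg _
  rw [Real.rpow_mul (by positivity), Real.rpow_two, ← Real.min_one_rpow hδlam hp',
    ← Real.mul_rpow (by positivity) (norm_nonneg _),
    ← Real.mul_rpow (by have := S.hc₀; positivity) (norm_nonneg _), hlam, ← mul_assoc]
  gcongr
  exact S.min_one_sq_le hδ lam

end JacobiHypergroup

/-- **Lemma 2, case 1 < p ≤ 2**: for `1 < p ≤ 2` with conjugate exponent `p'` and
`f ∈ L^p_A(ℝ₊)` on the Jacobi hypergroup, there exists `c > 0` such that for every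
`δ > 0`,
`(∫₀^∞ min{1,(δx)^(2p')} |𝓕(f)(x)|^(p') dx/|c(x)|²)^(1/p') ≤ c ω_{A,p}(f)(δ)`. -/
theorem lemma2_one_lt_p (S : JacobiHypergroup) (p p' : ℝ) (hp : 1 < p) (hp2 : p ≤ 2)
    (hpp' : 1 / p + 1 / p' = 1) (f : ℝ → ℂ) (hf : MemW S.A p f) :
    ∃ c > (0 : ℝ), ∀ δ > (0 : ℝ),
      (∫⁻ x in Set.Ioi (0 : ℝ),
          ENNReal.ofReal (min 1 ((δ * x) ^ (2 * p')) *
            ‖S.FT f x‖ ^ p' * S.cden x)) ^ (1 / p')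
        ≤ ENNReal.ofReal (c * S.omega p f δ) := by
  obtain ⟨C, hC, hHY⟩ := S.hHY p p' hp hp2 hpp'
  have hp' : 0 < p' :=
    (Real.holderConjugate_iff.mpr ⟨hp, by simpa only [one_div] using hpp'⟩).symm.pos
  refine ⟨C / S.c₀, div_pos hC S.hc₀, fun δ hδ => ?_⟩
  calc _ ≤ ENNReal.ofReal S.c₀⁻¹ * (∫⁻ x in Ioi (0 : ℝ),
          ENNReal.ofReal (‖S.FT (fun y => S.τ δ f y - f y) x‖ ^ p' * S.cden x)) ^ (1 / p') :=
        lintegral_ofReal_mul_rpow_one_div_le (inv_nonneg.mpr S.hc₀.le) hp'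
          (Eventually.of_forall S.cden_nonneg)
          (S.ae_min_one_rpow_mul_le hp.le hp2 hp'.le hδ hf)
    _ ≤ ENNReal.ofReal S.c₀⁻¹ * ENNReal.ofReal (C * S.omega p f δ) :=
        mul_le_mul_right (hHY _ (S.hτ_diff p hp.le δ f hf)) _
    _ = ENNReal.ofReal (C / S.c₀ * S.omega p f δ) := by
        rw [← ENNReal.ofReal_mul (inv_nonneg.mpr S.hc₀.le), inv_mul_eq_div, mul_div_right_comm]
end

section
/- Lemma 2, case p = 1: Let f ∈ L¹_A(ℝ₊) on the Jacobi hypergroup. Then there exists a positive constant c such that for every δ > 0, ess sup_{x>0} ( min{1, (δx)²} |𝓕(f)(x)| ) ≤ c ω_{A,1}(f)(δ). -/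
open MeasureTheory Set Filter

/-!
The translation identity turns `(1 - φ_λ(δ)) 𝓕f(λ)` into `-𝓕(τ_δ f - f)(λ)`, whose modulus is
at most `‖τ_δ f - f‖_{A,1} = ω_{A,1}(f)(δ)`; dividing by the lower bound
`c₀ min{1, (λδ)²} ≤ |1 - φ_λ(δ)|` gives the claim with `c = 1/c₀`.
-/

namespace JacobiHypergroup

variable (S : JacobiHypergroup) {f : ℝ → ℂ}

theorem FT_translate_sub_self_ae (hf : MemW S.A 1 f) (δ : ℝ) :
    ∀ᵐ x ∂(volume.restrict (Ioi (0 : ℝ))),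
      S.FT (fun y => S.τ δ f y - f y) x = -((1 - S.φ x δ) * S.FT f x) := by
  filter_upwards [S.hτ_FT 1 le_rfl one_le_two δ f hf] with x hx
  rw [S.hFT_sub, hx]
  ring

theorem norm_one_sub_φ_mul_norm_FT_le_omega (hf : MemW S.A 1 f) (δ : ℝ) :
    ∀ᵐ x ∂(volume.restrict (Ioi (0 : ℝ))),
      ‖1 - S.φ x δ‖ * ‖S.FT f x‖ ≤ S.omega 1 f δ := by
  filter_upwards [S.FT_translate_sub_self_ae hf δ] with x hx
  calc ‖1 - S.φ x δ‖ * ‖S.FT f x‖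
      = ‖S.FT (fun y => S.τ δ f y - f y) x‖ := by rw [hx, norm_neg, norm_mul]
    _ ≤ S.omega 1 f δ := S.hFT_sup _ (S.hτ_diff 1 le_rfl δ f hf) x

theorem min_mul_norm_FT_le_omega_div (hf : MemW S.A 1 f) {δ : ℝ} (hδ : 0 < δ) :
    ∀ᵐ x ∂(volume.restrict (Ioi (0 : ℝ))),
      min 1 ((δ * x) ^ 2) * ‖S.FT f x‖ ≤ S.omega 1 f δ / S.c₀ := by
  filter_upwards [S.norm_one_sub_φ_mul_norm_FT_le_omega hf δ] with x hx
  rw [le_div_iff₀ S.hc₀, mul_comm δ x]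
  calc min 1 ((x * δ) ^ 2) * ‖S.FT f x‖ * S.c₀
      = S.c₀ * min 1 ((x * δ) ^ 2) * ‖S.FT f x‖ := by ring
    _ ≤ ‖1 - S.φ x δ‖ * ‖S.FT f x‖ := by gcongr; exact S.hφ_lower x δ hδ
    _ ≤ S.omega 1 f δ := hx

end JacobiHypergroup

/-- **Lemma 2, case p = 1**: for `f ∈ L¹_A(ℝ₊)` on the Jacobi hypergroup, there
exists `c > 0` such that for every `δ > 0`,
`ess sup_{x>0} ( min{1,(δx)²} |𝓕(f)(x)| ) ≤ c ω_{A,1}(f)(δ)`. -/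
theorem lemma2_p_eq_one (S : JacobiHypergroup) (f : ℝ → ℂ) (hf : MemW S.A 1 f) :
    ∃ c > (0 : ℝ), ∀ δ > (0 : ℝ),
      essSup (fun x : ℝ => ENNReal.ofReal (min 1 ((δ * x) ^ 2) * ‖S.FT f x‖))
          (volume.restrict (Set.Ioi (0 : ℝ)))
        ≤ ENNReal.ofReal (c * S.omega 1 f δ) := by
  refine ⟨S.c₀⁻¹, inv_pos.2 S.hc₀, fun δ hδ => essSup_le_of_ae_le _ ?_⟩
  filter_upwards [S.min_mul_norm_FT_le_omega_div hf hδ] with x hx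
  rw [inv_mul_eq_div]
  exact ENNReal.ofReal_le_ofReal hx
end

section
/- Key integral estimate in the proof of Theorem 1: Let 1 < p ≤ 2 and let f ∈ L^p_A(ℝ₊) on the Jacobi hypergroup. Then there exists a positive constant c such that for every δ > 0, ∫₀^{1/δ} t |𝓕(f)(t)| dt/|c(t)|² ≤ c ( ω_{A,p}(f)(δ) δ^{−3/p} δ^{−1} + ω_{A,p}(f)(δ) δ^{−2(α+1)/p} δ^{−1} ). -/
/-! For `0 < t < 1/δ` the lower bound `‖1 - φ_t(δ)‖ ≥ c₀ (tδ)²` and the translation identity give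
`‖𝓕 f(t)‖ ≤ c₀⁻¹ (tδ)⁻² ‖𝓕(τ_δ f - f)(t)‖`. Hölder's inequality for the Plancherel measure
`|c(t)|⁻² dt` with exponents `p` and `p'` then bounds the integral by
`c₀⁻¹ δ⁻² (∫₀^{1/δ} t^(-p) |c(t)|⁻² dt)^(1/p) ‖𝓕(τ_δ f - f)‖_{c,p'}`. The power bounds on
`|c(t)|⁻²` make the first factor `O(δ^(1-3/p) + δ^(1-2(α+1)/p))`, and Hausdorff–Young bounds the
second by `C ω_{A,p}(f)(δ)`. -/

open MeasureTheory Set Filter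

open scoped ENNReal

theorem lintegral_mul_mul_le_weighted_Lp_mul_Lq {α : Type*} [MeasurableSpace α]
    (μ : Measure α) {p q : ℝ} (hpq : p.HolderConjugate q) {f g w : α → ℝ≥0∞}
    (hf : Measurable f) (hg : Measurable g) (hw : Measurable w) :
    ∫⁻ a, f a * g a * w a ∂μ ≤
      (∫⁻ a, f a ^ p * w a ∂μ) ^ (1 / p) * (∫⁻ a, g a ^ q * w a ∂μ) ^ (1 / q) := by
  calc ∫⁻ a, f a * g a * w a ∂μ = ∫⁻ a, (f * g) a ∂μ.withDensity w := by
        rw [lintegral_withDensity_eq_lintegral_mul μ hw (hf.mul hg)]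
        simp only [Pi.mul_apply, mul_comm (w _)]
    _ ≤ _ := ENNReal.lintegral_mul_le_Lp_mul_Lq _ hpq hf.aemeasurable hg.aemeasurable
    _ = _ := by
        rw [lintegral_withDensity_eq_lintegral_mul μ hw (hf.pow_const p),
          lintegral_withDensity_eq_lintegral_mul μ hw (hg.pow_const q)]
        simp only [Pi.mul_apply, mul_comm (w _)]

theorem lintegral_Ioo_zero_rpow {R e : ℝ} (hR : 0 < R) (he : -1 < e) :
    ∫⁻ t in Ioo 0 R, ENNReal.ofReal (t ^ e) = ENNReal.ofReal (R ^ (e + 1) / (e + 1)) := by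
  have hint : IntegrableOn (fun t : ℝ => t ^ e) (Ioo 0 R) :=
    (intervalIntegral.intervalIntegrable_rpow' (a := 0) (b := R) he).1.mono_set
      Ioo_subset_Ioc_self
  rw [← ofReal_integral_eq_lintegral_ofReal hint
      ((ae_restrict_mem measurableSet_Ioo).mono fun t ht => Real.rpow_nonneg ht.1.le e),
    ← integral_Ioc_eq_integral_Ioo, ← intervalIntegral.integral_of_le hR.le,
    integral_rpow (Or.inl he), Real.zero_rpow (by linarith), sub_zero]

theorem Real.one_div_rpow_sub_rpow_one_div {δ : ℝ} (hδ : 0 < δ) {p : ℝ} (hp : p ≠ 0) (b : ℝ) :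
    ((1 / δ) ^ (b - p)) ^ (1 / p) = δ ^ (1 - b / p) := by
  rw [← Real.rpow_mul (by positivity), one_div δ, Real.inv_rpow hδ.le, ← Real.rpow_neg hδ.le]
  congr 1
  field_simp
  ring

theorem Real.inv_sq_mul_rpow_one_sub {δ : ℝ} (hδ : 0 < δ) (x : ℝ) :
    (δ ^ 2)⁻¹ * δ ^ (1 - x) = δ ^ (-x) * δ⁻¹ := by
  rw [← Real.rpow_natCast, ← Real.rpow_neg hδ.le, ← Real.rpow_neg_one, ← Real.rpow_add hδ,
    ← Real.rpow_add hδ]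
  ring_nf

namespace JacobiHypergroup

variable (S : JacobiHypergroup)

theorem cden_pos {t : ℝ} (ht : 0 < t) : 0 < S.cden t := by
  have habs : 0 < |t| := abs_pos.mpr ht.ne'
  rcases le_or_gt |t| S.k with hle | hlt
  · exact (mul_pos S.hk₁ (Real.rpow_pos_of_pos habs _)).trans_le (S.hcden_lo t hle).1
  · exact (mul_pos S.hk₁ (Real.rpow_pos_of_pos habs _)).trans_le (S.hcden_hi t hlt).1

/- Raising the exponent `2α+1` to `max 2 (2α+1)` costs only a constant on `t > k`, and keeps
`t ^ (-p) * cden t` integrable at `0` even when `2α + 2 ≤ p`. -/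
theorem exists_cden_le_rpow_add_rpow :
    ∃ K > 0, ∀ t > 0, S.cden t ≤ K * (t ^ (2 : ℝ) + t ^ max 2 (2 * S.α + 1)) := by
  set a := max 2 (2 * S.α + 1)
  have hk : 0 ≤ S.k ^ (2 * S.α + 1 - a) := Real.rpow_nonneg S.hk.le _
  refine ⟨S.k₂ * (1 + S.k ^ (2 * S.α + 1 - a)), mul_pos S.hk₂ (by positivity), fun t ht => ?_⟩
  have hk₂ := S.hk₂.le
  have h2 : 0 ≤ t ^ (2 : ℝ) := Real.rpow_nonneg ht.le _
  have ha : 0 ≤ t ^ a := Real.rpow_nonneg ht.le _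
  rcases le_or_gt t S.k with hle | hlt
  · have hbd := (S.hcden_lo t (by rwa [abs_of_pos ht])).2
    rw [abs_of_pos ht] at hbd
    nlinarith [mul_nonneg hk₂ (mul_nonneg hk h2), mul_nonneg hk₂ ha,
      mul_nonneg hk₂ (mul_nonneg hk ha)]
  · have hbd := (S.hcden_hi t (by rwa [abs_of_pos ht])).2
    rw [abs_of_pos ht] at hbd
    have hdom : t ^ (2 * S.α + 1) ≤ S.k ^ (2 * S.α + 1 - a) * t ^ a := by
      calc t ^ (2 * S.α + 1) = t ^ (2 * S.α + 1 - a) * t ^ a := by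
            rw [← Real.rpow_add ht]; ring_nf
        _ ≤ S.k ^ (2 * S.α + 1 - a) * t ^ a := mul_le_mul_of_nonneg_right
            (Real.rpow_le_rpow_of_nonpos S.hk hlt.le (sub_nonpos.mpr (le_max_right _ _))) ha
    nlinarith [mul_le_mul_of_nonneg_left hdom hk₂, mul_nonneg hk₂ (mul_nonneg hk h2),
      mul_nonneg hk₂ h2]

theorem exists_lintegral_rpow_neg_mul_cden_le {p : ℝ} (hp2 : p ≤ 2) :
    ∃ M > 0, ∀ R > 0, ∫⁻ t in Ioo 0 R, ENNReal.ofReal (t ^ (-p) * S.cden t) ≤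
      ENNReal.ofReal (M * (R ^ (3 - p) + R ^ (max 2 (2 * S.α + 1) + 1 - p))) := by
  obtain ⟨K, hK, hcden⟩ := S.exists_cden_le_rpow_add_rpow
  set a := max 2 (2 * S.α + 1)
  have ha : 2 ≤ a := le_max_left _ _
  have h3p : 0 < 3 - p := by linarith
  refine ⟨K / (3 - p), by positivity, fun R hR => ?_⟩
  have hpt : ∀ t ∈ Ioo 0 R, ENNReal.ofReal (t ^ (-p) * S.cden t) ≤
      ENNReal.ofReal K * (ENNReal.ofReal (t ^ (2 - p)) + ENNReal.ofReal (t ^ (a - p))) := by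
    intro t ht
    rw [← ENNReal.ofReal_add (Real.rpow_nonneg ht.1.le _) (Real.rpow_nonneg ht.1.le _),
      ← ENNReal.ofReal_mul hK.le, sub_eq_neg_add, sub_eq_neg_add, Real.rpow_add ht.1,
      Real.rpow_add ht.1, ← mul_add, mul_left_comm]
    exact ENNReal.ofReal_le_ofReal
      (mul_le_mul_of_nonneg_left (hcden t ht.1) (Real.rpow_nonneg ht.1.le _))
  calc ∫⁻ t in Ioo 0 R, ENNReal.ofReal (t ^ (-p) * S.cden t)
      ≤ ∫⁻ t in Ioo 0 R, ENNReal.ofReal K *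
          (ENNReal.ofReal (t ^ (2 - p)) + ENNReal.ofReal (t ^ (a - p))) :=
        setLIntegral_mono' measurableSet_Ioo hpt
    _ = ENNReal.ofReal K * (ENNReal.ofReal (R ^ (3 - p) / (3 - p)) +
          ENNReal.ofReal (R ^ (a + 1 - p) / (a + 1 - p))) := by
        rw [lintegral_const_mul' _ _ ENNReal.ofReal_ne_top, lintegral_add_left (by fun_prop),
          lintegral_Ioo_zero_rpow hR (by linarith), lintegral_Ioo_zero_rpow hR (by linarith)]
        ring_nf
    _ ≤ ENNReal.ofReal (K / (3 - p) * (R ^ (3 - p) + R ^ (a + 1 - p))) := by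
        have hx : 0 ≤ R ^ (3 - p) := Real.rpow_nonneg hR.le _
        have hy : 0 ≤ R ^ (a + 1 - p) := Real.rpow_nonneg hR.le _
        rw [← ENNReal.ofReal_add (by positivity) (div_nonneg hy (by linarith)),
          ← ENNReal.ofReal_mul hK.le]
        refine ENNReal.ofReal_le_ofReal ?_
        have : R ^ (a + 1 - p) / (a + 1 - p) ≤ R ^ (a + 1 - p) / (3 - p) :=
          div_le_div_of_nonneg_left hy h3p (by linarith)
        rw [div_mul_eq_mul_div, mul_div_assoc, add_div]
        gcongr

theorem exists_lintegral_rpow_neg_mul_cden_rpow_le {p : ℝ} (hp : 1 ≤ p) (hp2 : p ≤ 2) :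
    ∃ M > 0, ∀ δ > 0,
      (∫⁻ t in Ioo 0 (1 / δ), ENNReal.ofReal (t ^ (-p) * S.cden t)) ^ (1 / p) ≤
        ENNReal.ofReal (M * (δ ^ (1 - 3 / p) + δ ^ (1 - 2 * (S.α + 1) / p))) := by
  obtain ⟨M, hM, hI⟩ := S.exists_lintegral_rpow_neg_mul_cden_le hp2
  set a := max 2 (2 * S.α + 1)
  have hp0 : 0 < p := by linarith
  have hp1 : 1 / p ≤ 1 := (div_le_one hp0).mpr hp
  refine ⟨2 * M ^ (1 / p), by positivity, fun δ hδ => ?_⟩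
  have hmax : δ ^ (1 - (a + 1) / p) ≤ δ ^ (1 - 3 / p) + δ ^ (1 - 2 * (S.α + 1) / p) := by
    rcases max_choice 2 (2 * S.α + 1) with h | h <;> simp only [a, h]
    · rw [show (2 : ℝ) + 1 = 3 by norm_num]
      exact le_add_of_nonneg_right (Real.rpow_nonneg hδ.le _)
    · rw [show 2 * S.α + 1 + 1 = 2 * (S.α + 1) by ring]
      exact le_add_of_nonneg_left (Real.rpow_nonneg hδ.le _)
  have hroot : (M * ((1 / δ) ^ (3 - p) + (1 / δ) ^ (a + 1 - p))) ^ (1 / p) ≤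
      2 * M ^ (1 / p) * (δ ^ (1 - 3 / p) + δ ^ (1 - 2 * (S.α + 1) / p)) := by
    rw [Real.mul_rpow hM.le (by positivity)]
    calc M ^ (1 / p) * ((1 / δ) ^ (3 - p) + (1 / δ) ^ (a + 1 - p)) ^ (1 / p)
        ≤ M ^ (1 / p) * (δ ^ (1 - 3 / p) + δ ^ (1 - (a + 1) / p)) := by
          rw [← Real.one_div_rpow_sub_rpow_one_div hδ hp0.ne',
            ← Real.one_div_rpow_sub_rpow_one_div hδ hp0.ne']
          gcongr
          exact Real.rpow_add_le_add_rpow (by positivity) (by positivity) (by positivity) hp1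
      _ ≤ _ := by
          have := Real.rpow_nonneg hδ.le (1 - 3 / p)
          have := Real.rpow_nonneg hδ.le (1 - 2 * (S.α + 1) / p)
          have := Real.rpow_nonneg hM.le (1 / p)
          nlinarith
  calc (∫⁻ t in Ioo 0 (1 / δ), ENNReal.ofReal (t ^ (-p) * S.cden t)) ^ (1 / p)
      ≤ ENNReal.ofReal (M * ((1 / δ) ^ (3 - p) + (1 / δ) ^ (a + 1 - p))) ^ (1 / p) :=
        ENNReal.rpow_le_rpow (hI _ (by positivity)) (by positivity)
    _ ≤ _ := by
        rw [ENNReal.ofReal_rpow_of_nonneg (by positivity) (by positivity)]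
        exact ENNReal.ofReal_le_ofReal hroot

theorem ae_mul_norm_FT_le_norm_FT_sub {p : ℝ} (hp : 1 ≤ p) (hp2 : p ≤ 2) {f : ℝ → ℂ}
    (hf : MemW S.A p f) {δ : ℝ} (hδ : 0 < δ) :
    ∀ᵐ t ∂volume.restrict (Ioo 0 (1 / δ)),
      S.c₀ * (t * δ) ^ 2 * ‖S.FT f t‖ ≤ ‖S.FT (fun y => S.τ δ f y - f y) t‖ := by
  filter_upwards [ae_restrict_of_ae_restrict_of_subset Ioo_subset_Ioi_self
      (S.hτ_FT p hp hp2 δ f hf), ae_restrict_mem measurableSet_Ioo] with t hτ ht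
  have htδ : t * δ < 1 := (lt_div_iff₀ hδ).mp ht.2
  have htδ0 : 0 < t * δ := mul_pos ht.1 hδ
  have hlow := S.hφ_lower t δ hδ
  rw [min_eq_right (by nlinarith), norm_sub_rev] at hlow
  rw [S.hFT_sub, hτ, ← sub_one_mul, norm_mul]
  exact mul_le_mul_of_nonneg_right hlow (norm_nonneg _)

theorem lintegral_mul_norm_FT_mul_cden_le {p : ℝ} (hp : 1 < p) (hp2 : p ≤ 2) {f : ℝ → ℂ}
    (hf : MemW S.A p f) {δ : ℝ} (hδ : 0 < δ) :
    ∫⁻ t in Ioo 0 (1 / δ), ENNReal.ofReal (t * ‖S.FT f t‖ * S.cden t) ≤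
      ENNReal.ofReal (S.c₀⁻¹ * (δ ^ 2)⁻¹) *
        ((∫⁻ t in Ioo 0 (1 / δ), ENNReal.ofReal (t ^ (-p) * S.cden t)) ^ (1 / p) *
          (∫⁻ t in Ioo 0 (1 / δ), ENNReal.ofReal
            (‖S.FT (fun y => S.τ δ f y - f y) t‖ ^ p.conjExponent * S.cden t)) ^
              (1 / p.conjExponent)) := by
  set g : ℝ → ℂ := fun y => S.τ δ f y - f y
  set q := p.conjExponent
  have hpq : p.HolderConjugate q := .conjExponent hp
  have hc₀ := S.hc₀
  have hpt : ∀ᵐ t ∂volume.restrict (Ioo 0 (1 / δ)),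
      ENNReal.ofReal (t * ‖S.FT f t‖ * S.cden t) ≤ ENNReal.ofReal (S.c₀⁻¹ * (δ ^ 2)⁻¹) *
        (ENNReal.ofReal t⁻¹ * ENNReal.ofReal ‖S.FT g t‖ * ENNReal.ofReal (S.cden t)) := by
    filter_upwards [S.ae_mul_norm_FT_le_norm_FT_sub hp.le hp2 hf hδ,
      ae_restrict_mem measurableSet_Ioo] with t hF ht
    have ht0 := ht.1
    rw [← ENNReal.ofReal_mul (by positivity), ← ENNReal.ofReal_mul (by positivity),
      ← ENNReal.ofReal_mul (by positivity)]
    refine ENNReal.ofReal_le_ofReal ?_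
    have hFt : t * ‖S.FT f t‖ ≤ S.c₀⁻¹ * (δ ^ 2)⁻¹ * t⁻¹ * ‖S.FT g t‖ :=
      calc t * ‖S.FT f t‖ = S.c₀⁻¹ * (δ ^ 2)⁻¹ * t⁻¹ * (S.c₀ * (t * δ) ^ 2 * ‖S.FT f t‖) := by
            field_simp
        _ ≤ S.c₀⁻¹ * (δ ^ 2)⁻¹ * t⁻¹ * ‖S.FT g t‖ := by gcongr
    calc t * ‖S.FT f t‖ * S.cden t ≤ S.c₀⁻¹ * (δ ^ 2)⁻¹ * t⁻¹ * ‖S.FT g t‖ * S.cden t :=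
          mul_le_mul_of_nonneg_right hFt (S.cden_pos ht0).le
      _ = _ := by ring
  calc ∫⁻ t in Ioo 0 (1 / δ), ENNReal.ofReal (t * ‖S.FT f t‖ * S.cden t)
      ≤ ∫⁻ t in Ioo 0 (1 / δ), ENNReal.ofReal (S.c₀⁻¹ * (δ ^ 2)⁻¹) *
          (ENNReal.ofReal t⁻¹ * ENNReal.ofReal ‖S.FT g t‖ * ENNReal.ofReal (S.cden t)) :=
        lintegral_mono_ae hpt
    _ = ENNReal.ofReal (S.c₀⁻¹ * (δ ^ 2)⁻¹) * ∫⁻ t in Ioo 0 (1 / δ),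
          ENNReal.ofReal t⁻¹ * ENNReal.ofReal ‖S.FT g t‖ * ENNReal.ofReal (S.cden t) :=
        lintegral_const_mul' _ _ ENNReal.ofReal_ne_top
    _ ≤ ENNReal.ofReal (S.c₀⁻¹ * (δ ^ 2)⁻¹) *
          ((∫⁻ t in Ioo 0 (1 / δ), ENNReal.ofReal t⁻¹ ^ p * ENNReal.ofReal (S.cden t)) ^ (1 / p) *
            (∫⁻ t in Ioo 0 (1 / δ), ENNReal.ofReal ‖S.FT g t‖ ^ q *
              ENNReal.ofReal (S.cden t)) ^ (1 / q)) := by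
        gcongr
        exact lintegral_mul_mul_le_weighted_Lp_mul_Lq _ hpq measurable_inv.ennreal_ofReal
          (S.hFT_meas g).norm.ennreal_ofReal S.hcden_cont.measurable.ennreal_ofReal
    _ = _ := by
        congr 3
        · refine setLIntegral_congr_fun measurableSet_Ioo fun t ht => ?_
          rw [ENNReal.ofReal_rpow_of_nonneg (inv_nonneg.mpr ht.1.le) hpq.nonneg,
            ← ENNReal.ofReal_mul (Real.rpow_nonneg (inv_nonneg.mpr ht.1.le) _),
            Real.inv_rpow ht.1.le, Real.rpow_neg ht.1.le]
        · refine lintegral_congr fun t => ?_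
          rw [ENNReal.ofReal_rpow_of_nonneg (norm_nonneg _) hpq.symm.nonneg,
            ← ENNReal.ofReal_mul (by positivity)]

end JacobiHypergroup

/-- **Key integral estimate in the proof of Theorem 1**: for `1 < p ≤ 2` and
`f ∈ L^p_A(ℝ₊)` on the Jacobi hypergroup, there exists `c > 0` such that for every
`δ > 0`,
`∫₀^{1/δ} t |𝓕(f)(t)| dt/|c(t)|²
   ≤ c (ω_{A,p}(f)(δ) δ^(-3/p) δ⁻¹ + ω_{A,p}(f)(δ) δ^(-2(α+1)/p) δ⁻¹)`. -/
theorem key_integral_estimate (S : JacobiHypergroup) (p : ℝ) (hp : 1 < p)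
    (hp2 : p ≤ 2) (f : ℝ → ℂ) (hf : MemW S.A p f) :
    ∃ c > (0 : ℝ), ∀ δ > (0 : ℝ),
      ∫⁻ t in Set.Ioo (0 : ℝ) (1 / δ),
          ENNReal.ofReal (t * ‖S.FT f t‖ * S.cden t)
        ≤ ENNReal.ofReal (c * (S.omega p f δ * δ ^ (-(3 / p)) * δ⁻¹ +
            S.omega p f δ * δ ^ (-(2 * (S.α + 1) / p)) * δ⁻¹)) := by
  have hpq : p.HolderConjugate p.conjExponent := .conjExponent hp
  obtain ⟨C, hC, hHY⟩ :=
    S.hHY p p.conjExponent hp hp2 (by simpa only [one_div] using hpq.inv_add_inv_eq_one)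
  obtain ⟨M, hM, hweight⟩ := S.exists_lintegral_rpow_neg_mul_cden_rpow_le hp.le hp2
  have hc₀ := S.hc₀
  refine ⟨S.c₀⁻¹ * M * C, by positivity, fun δ hδ => ?_⟩
  have hmod : (∫⁻ t in Ioo 0 (1 / δ), ENNReal.ofReal
      (‖S.FT (fun y => S.τ δ f y - f y) t‖ ^ p.conjExponent * S.cden t)) ^ (1 / p.conjExponent) ≤
        ENNReal.ofReal (C * S.omega p f δ) :=
    (ENNReal.rpow_le_rpow (lintegral_mono_set Ioo_subset_Ioi_self)
      hpq.symm.one_div_nonneg).trans (hHY _ (S.hτ_diff p hp.le δ f hf))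
  have h3 := Real.inv_sq_mul_rpow_one_sub hδ (3 / p)
  have hα := Real.inv_sq_mul_rpow_one_sub hδ (2 * (S.α + 1) / p)
  calc _ ≤ _ := S.lintegral_mul_norm_FT_mul_cden_le hp hp2 hf hδ
    _ ≤ ENNReal.ofReal (S.c₀⁻¹ * (δ ^ 2)⁻¹) *
          (ENNReal.ofReal (M * (δ ^ (1 - 3 / p) + δ ^ (1 - 2 * (S.α + 1) / p))) *
            ENNReal.ofReal (C * S.omega p f δ)) := by
        gcongr
        exact hweight δ hδ
    _ = _ := by
        rw [← ENNReal.ofReal_mul (by positivity), ← ENNReal.ofReal_mul (by positivity)]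
        congr 1
        linear_combination (S.c₀⁻¹ * M * C * S.omega p f δ) * (h3 + hα)
end
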